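/- arXiv:0906.0428 — 7 statements merged into one kernel-verified Lean document; each statement's English description precedes it below -/
import Mathlib

section
/- Let X₁, X₂, … be i.i.d. real random variables with continuous distribution function F, let F_n be the empirical distribution function of the first n observations, and let D_n = sup_t |F_n(t) − F(t)| be the Kolmogorov statistic. For 0 < a < 1 define f(a,t) = (a+t)·ln((a+t)/t) + (1−a−t)·ln((1−a−t)/(1−t)) for 0 < t ≤ 1−a (with the convention giving the limiting value at t = 0), f(a,t) = +∞ for 1−a < t ≤ 1, and f₀(a) = inf_{0<t<1} f(a,t). Then for every a ∈ (0,1), lim_{n→∞} n^{−1} ln P(D_n > a) = −f₀(a). -/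
open MeasureTheory ProbabilityTheory Filter Set Real Topology

noncomputable section

/-- The empirical distribution function `Fₙ(t) = n⁻¹ Σ_{j<n} 1{X j < t}`. -/
def empDF {Ω : Type*} (X : ℕ → Ω → ℝ) (n : ℕ) (t : ℝ) (ω : Ω) : ℝ :=
  (n : ℝ)⁻¹ * ∑ j ∈ Finset.range n, if X j ω < t then 1 else 0

/-- The function `f(a,t)`, equal to
`(a+t)·ln((a+t)/t) + (1−a−t)·ln((1−a−t)/(1−t))` for `t ≤ 1−a` and `+∞`
otherwise, as an extended real number. -/
def fKS (a t : ℝ) : EReal :=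
  if t ≤ 1 - a then
    (((a + t) * Real.log ((a + t) / t) +
        (1 - a - t) * Real.log ((1 - a - t) / (1 - t)) : ℝ) : EReal)
  else ⊤

/-- `f₀(a) = inf_{0<t<1} f(a,t)`. -/
def f0KS (a : ℝ) : EReal := ⨅ t ∈ Set.Ioo (0 : ℝ) 1, fKS a t

noncomputable def klB (q p : ℝ) : ℝ :=
  q * Real.log (q / p) + (1 - q) * Real.log ((1 - q) / (1 - p))

lemma klB_aux {x y : ℝ} (hx : 0 ≤ x) (hy : 0 < y) : x - y ≤ x * Real.log (x / y) := by
  rcases eq_or_lt_of_le hx with h | h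
  · simp [← h, hy.le]
  · have h1 : Real.log (y / x) ≤ y / x - 1 := Real.log_le_sub_one_of_pos (by positivity)
    have h2 : Real.log (x / y) = - Real.log (y / x) := by
      rw [← Real.log_inv]; congr 1; field_simp
    have h3 : x * (y / x - 1) = y - x := by field_simp
    have h4 : x * Real.log (y / x) ≤ y - x := by
      calc x * Real.log (y / x) ≤ x * (y / x - 1) :=
            mul_le_mul_of_nonneg_left h1 h.le
        _ = y - x := h3
    rw [h2]; linarith

lemma klB_nonneg {q p : ℝ} (hq0 : 0 ≤ q) (hq1 : q ≤ 1) (hp0 : 0 < p) (hp1 : p < 1) :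
    0 ≤ klB q p := by
  have h1 := klB_aux hq0 hp0
  have h2 := klB_aux (by linarith : (0:ℝ) ≤ 1 - q) (by linarith : (0:ℝ) < 1 - p)
  unfold klB; linarith

lemma klB_symm (q p : ℝ) : klB q p = klB (1 - q) (1 - p) := by
  unfold klB
  rw [show (1:ℝ) - (1 - q) = q by ring, show (1:ℝ) - (1 - p) = p by ring]
  ring

lemma chernoff_alg {p q : ℝ} (hp : 0 < p) (hp1 : p < 1) (hq : 0 < q) (hq1 : q < 1) :
    Real.exp (-(Real.log (q * (1 - p) / (p * (1 - q)))) * q) *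
      (p * Real.exp (Real.log (q * (1 - p) / (p * (1 - q)))) + (1 - p))
      = Real.exp (-(klB q p)) := by
  have h1p : (0:ℝ) < 1 - p := by linarith
  have h1q : (0:ℝ) < 1 - q := by linarith
  have harg : 0 < q * (1 - p) / (p * (1 - q)) := by positivity
  rw [Real.exp_log harg]
  have h2 : p * (q * (1 - p) / (p * (1 - q))) + (1 - p) = (1 - p) / (1 - q) := by
    field_simp
    ring
  rw [h2]
  have h3 : (1 - p) / (1 - q) = Real.exp (Real.log ((1 - p) / (1 - q))) := by
    rw [Real.exp_log (by positivity)]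
  rw [h3, ← Real.exp_add]
  congr 1
  have e1 : Real.log (q * (1 - p) / (p * (1 - q)))
      = Real.log q + Real.log (1 - p) - (Real.log p + Real.log (1 - q)) := by
    rw [Real.log_div (by positivity) (by positivity), Real.log_mul hq.ne' (by linarith),
      Real.log_mul hp.ne' (by linarith)]
  have e2 : Real.log ((1 - p) / (1 - q)) = Real.log (1 - p) - Real.log (1 - q) :=
    Real.log_div (by linarith) (by linarith)
  have e3 : Real.log (q / p) = Real.log q - Real.log p := Real.log_div hq.ne' hp.ne'
  have e4 : Real.log ((1 - q) / (1 - p)) = Real.log (1 - q) - Real.log (1 - p) :=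
    Real.log_div (by linarith) (by linarith)
  unfold klB
  rw [e1, e2, e3, e4]; ring

lemma continuousAt_klB_left {p q₀ : ℝ} (hp : 0 < p) (hp1 : p < 1) (h0 : 0 < q₀) (h1 : q₀ < 1) :
    ContinuousAt (fun q => klB q p) q₀ := by
  unfold klB
  have h1p : (0:ℝ) < 1 - p := by linarith
  have h1q : (0:ℝ) < 1 - q₀ := by linarith
  have c1 : ContinuousAt (fun q : ℝ => q * Real.log (q / p)) q₀ := by
    exact continuousAt_id.mul ((Real.continuousAt_log (by positivity)).comp
      (continuousAt_id.div_const p))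
  have c2 : ContinuousAt (fun q : ℝ => (1 - q) * Real.log ((1 - q) / (1 - p))) q₀ := by
    have hc : ContinuousAt (fun q : ℝ => (1 - q) / (1 - p)) q₀ :=
      (continuousAt_const.sub continuousAt_id).div_const _
    exact (continuousAt_const.sub continuousAt_id).mul
      ((Real.continuousAt_log (by positivity)).comp hc)
  exact c1.add c2

lemma klB_one (p : ℝ) : klB 1 p = Real.log (1 / p) := by simp [klB]

open Topology in
lemma tendsto_klB_endpoint {a : ℝ} (ha : 0 < a) (ha1 : a < 1) :
    Tendsto (fun t => klB (a + t) t) (𝓝[<] (1 - a)) (𝓝 (klB 1 (1 - a))) := by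
  have h1a : (0:ℝ) < 1 - a := by linarith
  have hT1 : Tendsto (fun t : ℝ => (a + t) * Real.log ((a + t) / t)) (𝓝[<] (1 - a))
      (𝓝 ((a + (1 - a)) * Real.log ((a + (1 - a)) / (1 - a)))) := by
    have hc : ContinuousAt (fun t : ℝ => (a + t) * Real.log ((a + t) / t)) (1 - a) := by
      have harg : ContinuousAt (fun t : ℝ => (a + t) / t) (1 - a) :=
        (continuousAt_const.add continuousAt_id).div continuousAt_id h1a.ne'
      refine (continuousAt_const.add continuousAt_id).mul (harg.log ?_)
      show (a + (1 - a)) / (1 - a) ≠ 0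
      positivity
    exact hc.tendsto.mono_left nhdsWithin_le_nhds
  have hT2 : Tendsto (fun t : ℝ => (1 - (a + t)) * Real.log ((1 - (a + t)) / (1 - t)))
      (𝓝[<] (1 - a)) (𝓝 0) := by
    have hu : Tendsto (fun t : ℝ => 1 - (a + t)) (𝓝[<] (1 - a)) (𝓝 0) := by
      have hc : ContinuousAt (fun t : ℝ => 1 - (a + t)) (1 - a) :=
        continuousAt_const.sub (continuousAt_const.add continuousAt_id)
      have h := hc.tendsto.mono_left (nhdsWithin_le_nhds (s := Iio (1 - a)))
      rwa [show 1 - (a + (1 - a)) = 0 by ring] at h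
    have hA : Tendsto (fun t : ℝ => (1 - (a + t)) * Real.log (1 - (a + t)))
        (𝓝[<] (1 - a)) (𝓝 0) := by
      have := (Real.continuous_mul_log.continuousAt (x := (0:ℝ))).tendsto.comp hu
      simpa [Function.comp_def] using this
    have hB : Tendsto (fun t : ℝ => (1 - (a + t)) * Real.log (1 - t)) (𝓝[<] (1 - a))
        (𝓝 0) := by
      have hl : ContinuousAt (fun t : ℝ => Real.log (1 - t)) (1 - a) := by
        refine (continuousAt_const.sub continuousAt_id).log ?_
        simp only [Pi.sub_apply, id_eq]
        intro h; rw [show 1 - (1 - a) = a by ring] at h; exact ha.ne' h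
      have := hu.mul (hl.tendsto.mono_left nhdsWithin_le_nhds)
      simpa using this
    have heq : ∀ᶠ t in 𝓝[<] (1 - a),
        (1 - (a + t)) * Real.log (1 - (a + t)) - (1 - (a + t)) * Real.log (1 - t)
          = (1 - (a + t)) * Real.log ((1 - (a + t)) / (1 - t)) := by
      filter_upwards [Ioo_mem_nhdsLT_of_mem
        (show (1:ℝ) - a ∈ Ioc (0:ℝ) (1 - a) from ⟨h1a, le_refl _⟩)] with t ht
      obtain ⟨ht1, ht2⟩ := ht
      have hu0 : 0 < 1 - (a + t) := by linarith
      have ht0 : 0 < 1 - t := by linarith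
      rw [Real.log_div hu0.ne' ht0.ne', mul_sub]
    have := (hA.sub hB).congr' heq
    simpa using this
  have h := hT1.add hT2
  rw [klB_one]
  unfold klB
  rw [show a + (1 - a) = 1 by ring] at h
  simpa using h

noncomputable def f0R (a : ℝ) : ℝ := sInf ((fun t => klB (a + t) t) '' Set.Ioc 0 (1 - a))

lemma f0R_set_nonempty {a : ℝ} (ha1 : a < 1) :
    ((fun t => klB (a + t) t) '' Set.Ioc 0 (1 - a)).Nonempty :=
  ⟨_, ⟨1 - a, ⟨by linarith, le_refl _⟩, rfl⟩⟩

lemma f0R_set_bddBelow {a : ℝ} (ha : 0 < a) (ha1 : a < 1) :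
    BddBelow ((fun t => klB (a + t) t) '' Set.Ioc 0 (1 - a)) := by
  refine ⟨0, fun y hy => ?_⟩
  obtain ⟨t, ⟨ht0, ht1⟩, rfl⟩ := hy
  exact klB_nonneg (by linarith) (by linarith) ht0 (by linarith)

lemma f0R_le {a : ℝ} (ha : 0 < a) (ha1 : a < 1) {t : ℝ} (ht : t ∈ Set.Ioc 0 (1 - a)) :
    f0R a ≤ klB (a + t) t :=
  csInf_le (f0R_set_bddBelow ha ha1) ⟨t, ht, rfl⟩

lemma f0R_nonneg {a : ℝ} (ha : 0 < a) (ha1 : a < 1) : 0 ≤ f0R a :=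
  le_csInf (f0R_set_nonempty ha1) fun y hy => by
    obtain ⟨t, ⟨ht0, ht1⟩, rfl⟩ := hy
    exact klB_nonneg (by linarith) (by linarith) ht0 (by linarith)

open Topology in
lemma f0R_exists_near {a : ℝ} (ha : 0 < a) (ha1 : a < 1) {ε : ℝ} (hε : 0 < ε) :
    ∃ t ∈ Set.Ioo 0 (1 - a), klB (a + t) t < f0R a + ε := by
  have h := (csInf_lt_iff (f0R_set_bddBelow ha ha1) (f0R_set_nonempty ha1)).mp
    (show f0R a < f0R a + ε by linarith)
  obtain ⟨y, ⟨t, ⟨ht0, ht1⟩, rfl⟩, hlt⟩ := h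
  rcases lt_or_eq_of_le ht1 with h' | h'
  · exact ⟨t, ⟨ht0, h'⟩, hlt⟩
  · subst h'
    have hlt' : klB (a + (1 - a)) (1 - a) < f0R a + ε := hlt
    rw [show a + (1 - a) = 1 by ring] at hlt'
    have hev : ∀ᶠ s in 𝓝[<] (1 - a),
        klB (a + s) s < f0R a + ε :=
      (tendsto_klB_endpoint ha ha1).eventually_lt_const (by linarith)
    have hmem : ∀ᶠ s in 𝓝[<] (1 - a), s ∈ Set.Ioo 0 (1 - a) := by
      filter_upwards [Ioo_mem_nhdsLT_of_mem
        (show (1:ℝ) - a ∈ Ioc (0:ℝ) (1 - a) from ⟨by linarith, le_refl _⟩)] with s hs using hs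
    obtain ⟨s, hs1, hs2⟩ := (hev.and hmem).exists
    exact ⟨s, hs2, hs1⟩
open MeasureTheory ProbabilityTheory

noncomputable def nCount {Ω : Type*} (X : ℕ → Ω → ℝ) (n : ℕ) (t : ℝ) (ω : Ω) : ℕ :=
  ((Finset.range n).filter (fun j => X j ω < t)).card

section Unimodal

variable {n k : ℕ}

private noncomputable def wB (n k j : ℕ) : ℝ :=
  (n.choose j : ℝ) * ((k:ℝ)/n)^j * (1 - (k:ℝ)/n)^(n-j)

lemma wB_step_cast (hjn : j ≤ n) :
    ((n.choose (j+1) : ℝ)) * ((j:ℝ)+1) = (n.choose j : ℝ) * ((n:ℝ) - j) := by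
  have h := Nat.choose_succ_right_eq n j
  calc ((n.choose (j+1) : ℝ)) * ((j:ℝ)+1) = ((n.choose (j+1) * (j+1) : ℕ) : ℝ) := by
        push_cast; ring
    _ = ((n.choose j * (n - j) : ℕ) : ℝ) := by rw [h]
    _ = (n.choose j : ℝ) * ((n:ℝ) - j) := by push_cast [hjn]; ring

lemma wB_compare (hk0 : 0 < k) (hkn : k < n) {j : ℕ} (hjn : j < n) :
    (((j:ℝ)+1) * wB n k j = ((n.choose j : ℝ) * ((k:ℝ)/n)^j * (1 - (k:ℝ)/n)^(n-(j+1)))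
        * (((j:ℝ)+1) * (1 - (k:ℝ)/n)))
    ∧ (((j:ℝ)+1) * wB n k (j+1) = ((n.choose j : ℝ) * ((k:ℝ)/n)^j * (1 - (k:ℝ)/n)^(n-(j+1)))
        * (((n:ℝ)-j) * ((k:ℝ)/n))) := by
  have hsub : n - j = (n - (j+1)) + 1 := by omega
  constructor
  · unfold wB; rw [hsub, pow_succ]; ring
  · unfold wB
    rw [pow_succ]
    have hc := wB_step_cast (n := n) (j := j) hjn.le
    linear_combination (((k:ℝ)/n)^j * ((k:ℝ)/n) * (1 - (k:ℝ)/n)^(n-(j+1))) * hc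

lemma wB_le_peak (hk0 : 0 < k) (hkn : k < n) {j : ℕ} (hj : j ≤ n) :
    wB n k j ≤ wB n k k := by
  have hn0 : 0 < n := Nat.lt_of_le_of_lt (Nat.zero_le k) hkn
  have hn : (0:ℝ) < n := by exact_mod_cast hn0
  have hq : (0:ℝ) < (k:ℝ)/n := div_pos (by exact_mod_cast hk0) hn
  have hq1 : (k:ℝ)/n < 1 := by
    rw [div_lt_one hn]; exact_mod_cast hkn
  have h1q : (0:ℝ) < 1 - (k:ℝ)/n := by linarith
  have hnq : (n:ℝ) * ((k:ℝ)/n) = k := by field_simp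
  have base_nonneg : ∀ m : ℕ, (0:ℝ) ≤ (n.choose m : ℝ) * ((k:ℝ)/n)^m * (1 - (k:ℝ)/n)^(n-(m+1)) :=
    fun m => mul_nonneg (mul_nonneg (by positivity) (by positivity)) (pow_nonneg h1q.le _)
  have step_up : ∀ j, j + 1 ≤ k → wB n k j ≤ wB n k (j+1) := by
    intro j hjk
    have hjn : j < n := by omega
    obtain ⟨e1, e2⟩ := wB_compare hk0 hkn hjn
    have hjkR : (j:ℝ) + 1 ≤ k := by exact_mod_cast hjk
    have key : ((j:ℝ)+1) * (1 - (k:ℝ)/n) ≤ ((n:ℝ)-j) * ((k:ℝ)/n) := by nlinarith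
    have hpos : (0:ℝ) < (j:ℝ) + 1 := by positivity
    have h2 : (((j:ℝ)+1) * wB n k j) ≤ (((j:ℝ)+1) * wB n k (j+1)) := by
      rw [e1, e2]
      exact mul_le_mul_of_nonneg_left key (base_nonneg j)
    exact le_of_mul_le_mul_left h2 hpos
  have step_down : ∀ j, k ≤ j → j < n → wB n k (j+1) ≤ wB n k j := by
    intro j hkj hjn
    obtain ⟨e1, e2⟩ := wB_compare hk0 hkn hjn
    have hkjR : (k:ℝ) ≤ j := by exact_mod_cast hkj
    have key : ((n:ℝ)-j) * ((k:ℝ)/n) ≤ ((j:ℝ)+1) * (1 - (k:ℝ)/n) := by nlinarith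
    have hpos : (0:ℝ) < (j:ℝ) + 1 := by positivity
    have h2 : (((j:ℝ)+1) * wB n k (j+1)) ≤ (((j:ℝ)+1) * wB n k j) := by
      rw [e1, e2]
      exact mul_le_mul_of_nonneg_left key (base_nonneg j)
    exact le_of_mul_le_mul_left h2 hpos
  have up : ∀ i, i ≤ k → wB n k (k - i) ≤ wB n k k := by
    intro i
    induction i with
    | zero => intro _; simp
    | succ m ih =>
      intro hm
      have h1 : wB n k (k - (m+1)) ≤ wB n k (k - m) := by
        have he : (k - (m+1)) + 1 = k - m := by omega
        have := step_up (k - (m+1)) (by omega)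
        rwa [he] at this
      exact h1.trans (ih (by omega))
  have down : ∀ i, k + i ≤ n → wB n k (k + i) ≤ wB n k k := by
    intro i
    induction i with
    | zero => intro _; simp
    | succ m ih =>
      intro hm
      have h1 : wB n k (k + (m+1)) ≤ wB n k (k + m) := by
        have := step_down (k + m) (by omega) (by omega)
        rwa [show k + m + 1 = k + (m+1) by omega] at this
      exact h1.trans (ih (by omega))
  rcases le_total j k with h | h
  · have := up (k - j) (by omega)
    rwa [show k - (k - j) = j by omega] at this
  · have := down (j - k) (by omega)
    rwa [show k + (j - k) = j by omega] at this

lemma wB_sum (hk0 : 0 < k) (hkn : k ≤ n) :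
    ∑ j ∈ Finset.range (n+1), wB n k j = 1 := by
  have h := add_pow ((k:ℝ)/n) (1 - (k:ℝ)/n) n
  rw [show (k:ℝ)/n + (1 - (k:ℝ)/n) = 1 by ring, one_pow] at h
  rw [h]
  apply Finset.sum_congr rfl
  intro j _
  unfold wB; ring

lemma wB_peak_ge (hk0 : 0 < k) (hkn : k < n) : 1 / ((n:ℝ)+1) ≤ wB n k k := by
  have h1 : (1:ℝ) = ∑ j ∈ Finset.range (n+1), wB n k j := (wB_sum hk0 hkn.le).symm
  have h2 : ∑ j ∈ Finset.range (n+1), wB n k j ≤ ∑ _j ∈ Finset.range (n+1), wB n k k :=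
    Finset.sum_le_sum fun j hj => wB_le_peak hk0 hkn (Nat.lt_succ_iff.mp (Finset.mem_range.mp hj))
  rw [Finset.sum_const, Finset.card_range, nsmul_eq_mul] at h2
  rw [div_le_iff₀ (by positivity : (0:ℝ) < (n:ℝ)+1)]
  push_cast at h2 ⊢
  linarith [h1.le.trans h2]

lemma binom_lower {p : ℝ} (hp : 0 < p) (hp1 : p < 1) {n k : ℕ} (hk0 : 0 < k) (hkn : k < n) :
    1/((n:ℝ)+1) * Real.exp (-(n:ℝ) * klB ((k:ℝ)/n) p)
      ≤ (n.choose k : ℝ) * p^k * (1-p)^(n-k) := by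
  have hn0 : 0 < n := Nat.lt_of_le_of_lt (Nat.zero_le k) hkn
  have hn : (0:ℝ) < n := by exact_mod_cast hn0
  set q : ℝ := (k:ℝ)/n with hqdef
  have hq : (0:ℝ) < q := div_pos (by exact_mod_cast hk0) hn
  have hq1 : q < 1 := by rw [hqdef, div_lt_one hn]; exact_mod_cast hkn
  have h1q : (0:ℝ) < 1 - q := by linarith
  have h1p : (0:ℝ) < 1 - p := by linarith
  have hnq : (n:ℝ) * q = k := by rw [hqdef]; field_simp
  have hnk : (n:ℝ) * (1 - q) = ((n - k : ℕ) : ℝ) := by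
    have : ((n - k : ℕ) : ℝ) = (n:ℝ) - k := by push_cast [hkn.le]; ring
    rw [this, ← hnq]; ring
  have hE : Real.exp (-(n:ℝ) * klB q p) = (p/q)^k * ((1-p)/(1-q))^(n-k) := by
    have hflip1 : Real.log (q/p) = - Real.log (p/q) := by
      rw [← Real.log_inv, inv_div]
    have hflip2 : Real.log ((1-q)/(1-p)) = - Real.log ((1-p)/(1-q)) := by
      rw [← Real.log_inv, inv_div]
    have : -(n:ℝ) * klB q p
        = (k:ℝ) * Real.log (p/q) + ((n-k : ℕ):ℝ) * Real.log ((1-p)/(1-q)) := by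
      unfold klB
      rw [hflip1, hflip2, ← hnq, ← hnk]
      ring
    rw [this, Real.exp_add, Real.exp_nat_mul, Real.exp_nat_mul,
      Real.exp_log (by positivity), Real.exp_log (by positivity)]
  have hsplit : (n.choose k : ℝ) * p^k * (1-p)^(n-k)
      = wB n k k * ((p/q)^k * ((1-p)/(1-q))^(n-k)) := by
    unfold wB
    rw [← hqdef]
    have e1 : p^k = q^k * (p/q)^k := by
      rw [← mul_pow, mul_div_cancel₀ _ hq.ne']
    have e2 : (1-p)^(n-k) = (1-q)^(n-k) * ((1-p)/(1-q))^(n-k) := by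
      rw [← mul_pow, mul_div_cancel₀ _ h1q.ne']
    rw [e1, e2]; ring
  rw [hsplit, hE]
  apply mul_le_mul_of_nonneg_right (wB_peak_ge hk0 hkn)
  positivity

end Unimodal

section Prob
variable {Ω : Type*} [MeasurableSpace Ω] {P : Measure Ω} [IsProbabilityMeasure P]
  {X : ℕ → Ω → ℝ} {F : ℝ → ℝ}

lemma empDF_eq_count (n : ℕ) (t : ℝ) (ω : Ω) :
    empDF X n t ω = (nCount X n t ω : ℝ) / n := by
  unfold empDF nCount
  rw [Finset.sum_boole]
  ring

lemma empDF_nonneg (n : ℕ) (t : ℝ) (ω : Ω) : 0 ≤ empDF X n t ω := by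
  rw [empDF_eq_count]; positivity

lemma nCount_le (n : ℕ) (t : ℝ) (ω : Ω) : nCount X n t ω ≤ n := by
  unfold nCount
  exact (Finset.card_filter_le _ _).trans_eq (Finset.card_range n)

lemma empDF_le_one (n : ℕ) (t : ℝ) (ω : Ω) : empDF X n t ω ≤ 1 := by
  rw [empDF_eq_count]
  rcases Nat.eq_zero_or_pos n with h | h
  · simp [h]
  · rw [div_le_one (by positivity)]
    exact_mod_cast nCount_le n t ω

lemma empDF_mono (n : ℕ) {t s : ℝ} (hts : t ≤ s) (ω : Ω) :
    empDF X n t ω ≤ empDF X n s ω := by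
  unfold empDF
  apply mul_le_mul_of_nonneg_left _ (by positivity)
  apply Finset.sum_le_sum
  intro j _
  by_cases h : X j ω < t
  · rw [if_pos h, if_pos (lt_of_lt_of_le h hts)]
  · rw [if_neg h]
    by_cases h' : X j ω < s <;> simp [h']

lemma bddAbove_dev (n : ℕ) (ω : Ω) (hF0 : ∀ t, 0 ≤ F t) (hF1 : ∀ t, F t ≤ 1) :
    BddAbove (Set.range fun t => |empDF X n t ω - F t|) := by
  refine ⟨2, fun y hy => ?_⟩
  obtain ⟨t, rfl⟩ := hy
  rw [abs_le]
  have h1 := empDF_nonneg (X := X) n t ω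
  have h2 := empDF_le_one (X := X) n t ω
  have h3 := hF1 t; have h4 := hF0 t
  constructor <;> linarith

end Prob
section Prob2
open MeasureTheory ProbabilityTheory
open scoped ENNReal
variable {Ω : Type*} [MeasurableSpace Ω] {P : Measure Ω} [IsProbabilityMeasure P]
  {X : ℕ → Ω → ℝ} {μ : Measure ℝ} {F : ℝ → ℝ}

lemma prob_Iio (hmeas : ∀ i, Measurable (X i)) (hdist : ∀ i, Measure.map (X i) P = μ)
    (hF : ∀ t, F t = (μ (Set.Iio t)).toReal) (j : ℕ) (t : ℝ) :
    P (X j ⁻¹' Set.Iio t) = ENNReal.ofReal (F t) := by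
  haveI hμ : IsProbabilityMeasure μ := by
    rw [← hdist 0]; exact Measure.isProbabilityMeasure_map (hmeas 0).aemeasurable
  have h1 : P (X j ⁻¹' Set.Iio t) = μ (Set.Iio t) := by
    rw [← hdist j, Measure.map_apply (hmeas j) measurableSet_Iio]
  rw [h1, hF t, ENNReal.ofReal_toReal (measure_ne_top μ _)]

lemma F_nonneg (hF : ∀ t, F t = (μ (Set.Iio t)).toReal) (t : ℝ) : 0 ≤ F t := by
  rw [hF t]; exact ENNReal.toReal_nonneg

lemma F_le_one (hmeas : ∀ i, Measurable (X i)) (hdist : ∀ i, Measure.map (X i) P = μ)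
    (hF : ∀ t, F t = (μ (Set.Iio t)).toReal) (t : ℝ) : F t ≤ 1 := by
  haveI hμ : IsProbabilityMeasure μ := by
    rw [← hdist 0]; exact Measure.isProbabilityMeasure_map (hmeas 0).aemeasurable
  rw [hF t]
  calc (μ (Set.Iio t)).toReal ≤ (μ Set.univ).toReal :=
        ENNReal.toReal_mono (measure_ne_top μ _) (measure_mono (Set.subset_univ _))
    _ = 1 := by simp

lemma F_mono (hmeas : ∀ i, Measurable (X i)) (hdist : ∀ i, Measure.map (X i) P = μ)
    (hF : ∀ t, F t = (μ (Set.Iio t)).toReal) : Monotone F := by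
  haveI hμ : IsProbabilityMeasure μ := by
    rw [← hdist 0]; exact Measure.isProbabilityMeasure_map (hmeas 0).aemeasurable
  intro t s hts
  rw [hF t, hF s]
  exact ENNReal.toReal_mono (measure_ne_top μ _) (measure_mono (Set.Iio_subset_Iio hts))

lemma prob_Ici (hmeas : ∀ i, Measurable (X i)) (hdist : ∀ i, Measure.map (X i) P = μ)
    (hF : ∀ t, F t = (μ (Set.Iio t)).toReal) (j : ℕ) (t : ℝ) :
    P (X j ⁻¹' Set.Ici t) = ENNReal.ofReal (1 - F t) := by
  have h0 : 0 ≤ F t := F_nonneg hF t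
  have hpre : X j ⁻¹' Set.Ici t = (X j ⁻¹' Set.Iio t)ᶜ := by
    rw [← Set.preimage_compl, Set.compl_Iio]
  rw [hpre, prob_compl_eq_one_sub ((hmeas j) measurableSet_Iio),
    prob_Iio hmeas hdist hF j t, ENNReal.ofReal_sub _ h0, ENNReal.ofReal_one]

lemma G_eq_iInter (n : ℕ) (A : Finset ℕ) (t : ℝ) [DecidablePred (· ∈ A)] :
    {ω | ∀ j ∈ Finset.range n, (X j ω < t ↔ j ∈ A)}
      = ⋂ j ∈ Finset.range n, X j ⁻¹' (if j ∈ A then Set.Iio t else Set.Ici t) := by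
  ext ω
  simp only [Set.mem_setOf_eq, Set.mem_iInter, Set.mem_preimage]
  constructor
  · intro h j hj
    by_cases hjA : j ∈ A
    · simp only [hjA, if_true]; exact Set.mem_Iio.mpr ((h j hj).mpr hjA)
    · simp only [hjA, if_false]
      exact Set.mem_Ici.mpr (not_lt.mp fun hlt => hjA ((h j hj).mp hlt))
  · intro h j hj
    by_cases hjA : j ∈ A
    · have := h j hj; rw [if_pos hjA] at this
      exact ⟨fun _ => hjA, fun _ => this⟩
    · have := h j hj; rw [if_neg hjA] at this
      exact ⟨fun hlt => absurd hlt (not_lt.mpr this), fun hjA' => absurd hjA' hjA⟩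

lemma measurable_G (hmeas : ∀ i, Measurable (X i)) (n : ℕ) (A : Finset ℕ) (t : ℝ) :
    MeasurableSet {ω | ∀ j ∈ Finset.range n, (X j ω < t ↔ j ∈ A)} := by
  classical
  rw [G_eq_iInter]
  refine MeasurableSet.biInter (Set.to_countable _) fun j _ => ?_
  split_ifs
  · exact (hmeas j) measurableSet_Iio
  · exact (hmeas j) measurableSet_Ici

lemma meas_G (hmeas : ∀ i, Measurable (X i))
    (hindep : iIndepFun X P)
    (hdist : ∀ i, Measure.map (X i) P = μ)
    (hF : ∀ t, F t = (μ (Set.Iio t)).toReal)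
    {n : ℕ} {A : Finset ℕ} (hA : A ⊆ Finset.range n) (t : ℝ) :
    P {ω | ∀ j ∈ Finset.range n, (X j ω < t ↔ j ∈ A)}
      = ENNReal.ofReal (F t) ^ A.card * ENNReal.ofReal (1 - F t) ^ (n - A.card) := by
  classical
  rw [G_eq_iInter,
    hindep.measure_inter_preimage_eq_mul (Finset.range n)
      (sets := fun j => if j ∈ A then Set.Iio t else Set.Ici t)
      (fun i _ => by
        show MeasurableSet (if i ∈ A then Set.Iio t else Set.Ici t)
        split_ifs
        exacts [measurableSet_Iio, measurableSet_Ici])]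
  have hprod : ∀ j ∈ Finset.range n,
      P (X j ⁻¹' (if j ∈ A then Set.Iio t else Set.Ici t))
        = if j ∈ A then ENNReal.ofReal (F t) else ENNReal.ofReal (1 - F t) := by
    intro j _
    split_ifs
    · exact prob_Iio hmeas hdist hF j t
    · exact prob_Ici hmeas hdist hF j t
  rw [Finset.prod_congr rfl hprod, Finset.prod_ite, Finset.prod_const, Finset.prod_const]
  congr 1
  · congr 1
    rw [Finset.filter_mem_eq_inter, Finset.inter_eq_right.mpr hA]
  · congr 1
    rw [Finset.filter_not, Finset.filter_mem_eq_inter, Finset.inter_eq_right.mpr hA,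
      Finset.card_sdiff_of_subset hA, Finset.card_range]

lemma meas_count_eq (hmeas : ∀ i, Measurable (X i))
    (hindep : iIndepFun X P)
    (hdist : ∀ i, Measure.map (X i) P = μ)
    (hF : ∀ t, F t = (μ (Set.Iio t)).toReal)
    {n k : ℕ} (t : ℝ) :
    P {ω | nCount X n t ω = k}
      = (n.choose k : ℝ≥0∞) * (ENNReal.ofReal (F t) ^ k * ENNReal.ofReal (1 - F t) ^ (n - k)) := by
  classical
  have hunion : {ω | nCount X n t ω = k}
      = ⋃ A ∈ (Finset.range n).powersetCard k,
          {ω | ∀ j ∈ Finset.range n, (X j ω < t ↔ j ∈ A)} := by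
    ext ω
    simp only [Set.mem_setOf_eq, Set.mem_iUnion]
    constructor
    · intro h
      refine ⟨(Finset.range n).filter (fun j => X j ω < t), ?_, ?_⟩
      · rw [Finset.mem_powersetCard]; exact ⟨Finset.filter_subset _ _, h⟩
      · intro j hj
        simp [Finset.mem_filter, hj]
    · rintro ⟨A, hA, hAω⟩
      rw [Finset.mem_powersetCard] at hA
      have hfa : (Finset.range n).filter (fun j => X j ω < t) = A := by
        ext j
        simp only [Finset.mem_filter]
        constructor
        · rintro ⟨hj, hlt⟩; exact (hAω j hj).mp hlt
        · intro hjA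
          have hj := hA.1 hjA
          exact ⟨hj, (hAω j hj).mpr hjA⟩
      unfold nCount; rw [hfa, hA.2]
  have hdisj : ((Finset.range n).powersetCard k : Set (Finset ℕ)).PairwiseDisjoint
      (fun A => {ω | ∀ j ∈ Finset.range n, (X j ω < t ↔ j ∈ A)}) := by
    intro A hA B hB hne
    rw [Finset.mem_coe, Finset.mem_powersetCard] at hA hB
    refine Set.disjoint_left.mpr fun ω hωA hωB => hne ?_
    apply Finset.ext
    intro j
    constructor
    · intro hjA
      have hj : j ∈ Finset.range n := hA.1 hjA
      exact (hωB j hj).mp ((hωA j hj).mpr hjA)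
    · intro hjB
      have hj : j ∈ Finset.range n := hB.1 hjB
      exact (hωA j hj).mp ((hωB j hj).mpr hjB)
  rw [hunion, measure_biUnion_finset hdisj (fun A _ => measurable_G hmeas n A t)]
  have hterm : ∀ A ∈ (Finset.range n).powersetCard k,
      P {ω | ∀ j ∈ Finset.range n, (X j ω < t ↔ j ∈ A)}
        = ENNReal.ofReal (F t) ^ k * ENNReal.ofReal (1 - F t) ^ (n - k) := by
    intro A hA
    rw [Finset.mem_powersetCard] at hA
    rw [meas_G hmeas hindep hdist hF hA.1 t, hA.2]
  rw [Finset.sum_congr rfl hterm, Finset.sum_const, Finset.card_powersetCard,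
    Finset.card_range, nsmul_eq_mul]

end Prob2
section Prob3
open MeasureTheory ProbabilityTheory
open scoped ENNReal
variable {Ω : Type*} [MeasurableSpace Ω] {P : Measure Ω} [IsProbabilityMeasure P]
  {X : ℕ → Ω → ℝ} {μ : Measure ℝ} {F : ℝ → ℝ}

lemma measurable_indicator' (hmeas : ∀ i, Measurable (X i)) (j : ℕ) (t : ℝ) :
    Measurable (fun ω => if X j ω < t then (1:ℝ) else 0) := by
  have : MeasurableSet {ω | X j ω < t} := (hmeas j) measurableSet_Iio
  exact Measurable.ite this measurable_const measurable_const

lemma measurable_S (hmeas : ∀ i, Measurable (X i)) (n : ℕ) (t : ℝ) :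
    Measurable (fun ω => ∑ j ∈ Finset.range n, if X j ω < t then (1:ℝ) else 0) :=
  Finset.measurable_sum _ (fun j _ => measurable_indicator' hmeas j t)

lemma S_bounds (n : ℕ) (t : ℝ) (ω : Ω) :
    0 ≤ (∑ j ∈ Finset.range n, if X j ω < t then (1:ℝ) else 0)
    ∧ (∑ j ∈ Finset.range n, if X j ω < t then (1:ℝ) else 0) ≤ n := by
  constructor
  · apply Finset.sum_nonneg; intro j _; split_ifs <;> norm_num
  · calc (∑ j ∈ Finset.range n, if X j ω < t then (1:ℝ) else 0)
        ≤ ∑ _j ∈ Finset.range n, (1:ℝ) := by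
          apply Finset.sum_le_sum; intro j _; split_ifs <;> norm_num
    _ = n := by simp

lemma integrable_exp_S (hmeas : ∀ i, Measurable (X i)) (n : ℕ) (t s : ℝ) :
    Integrable (fun ω => Real.exp (s * ∑ j ∈ Finset.range n, if X j ω < t then (1:ℝ) else 0)) P := by
  apply Integrable.mono' (integrable_const (Real.exp (|s| * n)))
  · exact (((measurable_S hmeas n t).const_mul s).exp).aestronglyMeasurable
  · apply Filter.Eventually.of_forall
    intro ω
    obtain ⟨h0, h1⟩ := S_bounds (X := X) n t ω
    rw [Real.norm_eq_abs, abs_of_pos (Real.exp_pos _), Real.exp_le_exp]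
    calc s * (∑ j ∈ Finset.range n, if X j ω < t then (1:ℝ) else 0)
        ≤ |s| * (∑ j ∈ Finset.range n, if X j ω < t then (1:ℝ) else 0) :=
          mul_le_mul_of_nonneg_right (le_abs_self s) h0
      _ ≤ |s| * (n:ℝ) := mul_le_mul_of_nonneg_left h1 (abs_nonneg s)

lemma mgf_S (hmeas : ∀ i, Measurable (X i))
    (hindep : iIndepFun X P)
    (hdist : ∀ i, Measure.map (X i) P = μ)
    (hF : ∀ t, F t = (μ (Set.Iio t)).toReal) (n : ℕ) (t s : ℝ) :
    mgf (fun ω => ∑ j ∈ Finset.range n, if X j ω < t then (1:ℝ) else 0) P s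
      = (F t * Real.exp s + (1 - F t))^n := by
  have hg : Measurable (fun x : ℝ => if x < t then (1:ℝ) else 0) :=
    Measurable.ite measurableSet_Iio measurable_const measurable_const
  have hY : iIndepFun
      (fun j => (fun x : ℝ => if x < t then (1:ℝ) else 0) ∘ X j) P :=
    hindep.comp _ (fun _ => hg)
  have hfun : (fun ω => ∑ j ∈ Finset.range n, if X j ω < t then (1:ℝ) else 0)
      = ∑ j ∈ Finset.range n, (fun x : ℝ => if x < t then (1:ℝ) else 0) ∘ X j := by
    funext ω
    rw [Finset.sum_apply]
    rfl
  rw [hfun, hY.mgf_sum (fun j => hg.comp (hmeas j))]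
  have hone : ∀ j ∈ Finset.range n,
      mgf ((fun x : ℝ => if x < t then (1:ℝ) else 0) ∘ X j) P s
        = F t * Real.exp s + (1 - F t) := by
    intro j _
    unfold mgf
    have heq : (fun ω => Real.exp (s * ((fun x : ℝ => if x < t then (1:ℝ) else 0) ∘ X j) ω))
        = fun ω => (X j ⁻¹' Set.Iio t).indicator (fun _ => Real.exp s - 1) ω + 1 := by
      funext ω
      by_cases h : X j ω < t
      · rw [Set.indicator_of_mem (by exact h : ω ∈ X j ⁻¹' Set.Iio t)]
        simp [Function.comp, h]
      · rw [Set.indicator_of_notMem (by exact h : ω ∉ X j ⁻¹' Set.Iio t)]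
        simp [Function.comp, h]
    rw [heq, integral_add ((integrable_const _).indicator ((hmeas j) measurableSet_Iio))
      (integrable_const 1)]
    rw [integral_indicator_const _ ((hmeas j) measurableSet_Iio), integral_const]
    have hPA : (P (X j ⁻¹' Set.Iio t)).toReal = F t := by
      rw [prob_Iio hmeas hdist hF j t, ENNReal.toReal_ofReal (F_nonneg hF t)]
    rw [measureReal_def, hPA]
    simp [smul_eq_mul]
    ring
  rw [Finset.prod_congr rfl hone, Finset.prod_const, Finset.card_range]

lemma event_ge_eq (n : ℕ) (hn : 0 < n) (t q : ℝ) :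
    {ω : Ω | q ≤ empDF X n t ω}
      = {ω : Ω | (n:ℝ) * q ≤ ∑ j ∈ Finset.range n, if X j ω < t then (1:ℝ) else 0} := by
  ext ω
  simp only [Set.mem_setOf_eq]
  unfold empDF
  rw [le_inv_mul_iff₀ (by positivity : (0:ℝ) < (n:ℝ))]

lemma event_le_eq (n : ℕ) (hn : 0 < n) (t q : ℝ) :
    {ω : Ω | empDF X n t ω ≤ q}
      = {ω : Ω | (∑ j ∈ Finset.range n, if X j ω < t then (1:ℝ) else 0) ≤ (n:ℝ) * q} := by
  ext ω
  simp only [Set.mem_setOf_eq]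
  unfold empDF
  rw [inv_mul_le_iff₀ (by positivity : (0:ℝ) < (n:ℝ))]

lemma chernoff_upper' (hmeas : ∀ i, Measurable (X i))
    (hindep : iIndepFun X P)
    (hdist : ∀ i, Measure.map (X i) P = μ)
    (hF : ∀ t, F t = (μ (Set.Iio t)).toReal) (n : ℕ) {t q : ℝ}
    (hp0 : 0 < F t) (hp1 : F t < 1) (hq1 : F t ≤ q) (hq2 : q < 1) :
    P {ω | q ≤ empDF X n t ω} ≤ ENNReal.ofReal (Real.exp (-(n:ℝ) * klB q (F t))) := by
  rcases Nat.eq_zero_or_pos n with hn | hn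
  · subst hn
    simp only [Nat.cast_zero, neg_zero, zero_mul, Real.exp_zero, ENNReal.ofReal_one]
    exact prob_le_one
  set p := F t with hpdef
  set s := Real.log (q * (1 - p) / (p * (1 - q))) with hsdef
  have hq0 : 0 < q := lt_of_lt_of_le hp0 hq1
  have h1q : 0 < 1 - q := by linarith
  have h1p : 0 < 1 - p := by linarith
  have hs : 0 ≤ s := by
    apply Real.log_nonneg
    rw [le_div_iff₀ (by positivity)]
    nlinarith
  have hmain := measure_ge_le_exp_mul_mgf (μ := P)
    (X := fun ω => ∑ j ∈ Finset.range n, if X j ω < t then (1:ℝ) else 0)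
    ((n:ℝ) * q) hs (integrable_exp_S hmeas n t s)
  rw [mgf_S hmeas hindep hdist hF n t s, ← hpdef] at hmain
  rw [event_ge_eq n hn t q]
  have hrhs : Real.exp (-s * ((n:ℝ) * q)) * (p * Real.exp s + (1 - p))^n
      = Real.exp (-(n:ℝ) * klB q p) := by
    have h1 : Real.exp (-s * ((n:ℝ) * q)) = (Real.exp (-s * q))^n := by
      rw [← Real.exp_nat_mul]; congr 1; ring
    rw [h1, ← mul_pow, chernoff_alg hp0 hp1 hq0 hq2, ← Real.exp_nat_mul]
    congr 1; ring
  rw [hrhs] at hmain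
  calc P {ω | (n:ℝ) * q ≤ ∑ j ∈ Finset.range n, if X j ω < t then (1:ℝ) else 0}
      = ENNReal.ofReal ((P {ω | (n:ℝ) * q ≤ ∑ j ∈ Finset.range n,
          if X j ω < t then (1:ℝ) else 0}).toReal) := (ENNReal.ofReal_toReal (measure_ne_top P _)).symm
    _ ≤ ENNReal.ofReal (Real.exp (-(n:ℝ) * klB q p)) := ENNReal.ofReal_le_ofReal hmain

lemma chernoff_lower' (hmeas : ∀ i, Measurable (X i))
    (hindep : iIndepFun X P)
    (hdist : ∀ i, Measure.map (X i) P = μ)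
    (hF : ∀ t, F t = (μ (Set.Iio t)).toReal) (n : ℕ) {t q : ℝ}
    (hp0 : 0 < F t) (hp1 : F t < 1) (hq1 : 0 < q) (hq2 : q ≤ F t) :
    P {ω | empDF X n t ω ≤ q} ≤ ENNReal.ofReal (Real.exp (-(n:ℝ) * klB q (F t))) := by
  rcases Nat.eq_zero_or_pos n with hn | hn
  · subst hn
    simp only [Nat.cast_zero, neg_zero, zero_mul, Real.exp_zero, ENNReal.ofReal_one]
    exact prob_le_one
  set p := F t with hpdef
  set s := Real.log (q * (1 - p) / (p * (1 - q))) with hsdef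
  have hq2' : q < 1 := lt_of_le_of_lt hq2 hp1
  have h1q : 0 < 1 - q := by linarith
  have h1p : 0 < 1 - p := by linarith
  have hs : s ≤ 0 := by
    apply Real.log_nonpos (by positivity)
    rw [div_le_one (by positivity)]
    nlinarith
  have hmain := measure_le_le_exp_mul_mgf (μ := P)
    (X := fun ω => ∑ j ∈ Finset.range n, if X j ω < t then (1:ℝ) else 0)
    ((n:ℝ) * q) hs (integrable_exp_S hmeas n t s)
  rw [mgf_S hmeas hindep hdist hF n t s, ← hpdef] at hmain
  rw [event_le_eq n hn t q]
  have hrhs : Real.exp (-s * ((n:ℝ) * q)) * (p * Real.exp s + (1 - p))^n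
      = Real.exp (-(n:ℝ) * klB q p) := by
    have h1 : Real.exp (-s * ((n:ℝ) * q)) = (Real.exp (-s * q))^n := by
      rw [← Real.exp_nat_mul]; congr 1; ring
    rw [h1, ← mul_pow, chernoff_alg hp0 hp1 hq1 hq2', ← Real.exp_nat_mul]
    congr 1; ring
  rw [hrhs] at hmain
  calc P {ω | (∑ j ∈ Finset.range n, if X j ω < t then (1:ℝ) else 0) ≤ (n:ℝ) * q}
      = ENNReal.ofReal ((P {ω | (∑ j ∈ Finset.range n,
          if X j ω < t then (1:ℝ) else 0) ≤ (n:ℝ) * q}).toReal) := (ENNReal.ofReal_toReal (measure_ne_top P _)).symm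
    _ ≤ ENNReal.ofReal (Real.exp (-(n:ℝ) * klB q p)) := ENNReal.ofReal_le_ofReal hmain

end Prob3
lemma klB_zero (p : ℝ) : klB 0 p = Real.log (1 / (1 - p)) := by simp [klB]

section Prob4
open MeasureTheory ProbabilityTheory
open scoped ENNReal
variable {Ω : Type*} [MeasurableSpace Ω] {P : Measure Ω} [IsProbabilityMeasure P]
  {X : ℕ → Ω → ℝ} {μ : Measure ℝ} {F : ℝ → ℝ}

lemma chernoff_upper_one (hmeas : ∀ i, Measurable (X i))
    (hindep : iIndepFun X P)
    (hdist : ∀ i, Measure.map (X i) P = μ)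
    (hF : ∀ t, F t = (μ (Set.Iio t)).toReal) (n : ℕ) {t : ℝ} (hp0 : 0 < F t) :
    P {ω | (1:ℝ) ≤ empDF X n t ω} ≤ ENNReal.ofReal (Real.exp (-(n:ℝ) * klB 1 (F t))) := by
  classical
  have hsub : {ω : Ω | (1:ℝ) ≤ empDF X n t ω}
      ⊆ {ω | ∀ j ∈ Finset.range n, (X j ω < t ↔ j ∈ Finset.range n)} := by
    intro ω hω
    rw [Set.mem_setOf_eq, empDF_eq_count] at hω
    rcases Nat.eq_zero_or_pos n with hn | hn
    · subst hn; simp at hω; norm_num at hω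
    · have hnc : (n:ℝ) ≤ nCount X n t ω := by
        rw [le_div_iff₀ (by positivity : (0:ℝ) < (n:ℝ)), one_mul] at hω
        exact hω
      have hnc' : n ≤ nCount X n t ω := by exact_mod_cast hnc
      have hfa : (Finset.range n).filter (fun j => X j ω < t) = Finset.range n := by
        apply Finset.eq_of_subset_of_card_le (Finset.filter_subset _ _)
        rw [Finset.card_range]
        exact hnc'
      intro j hj
      refine ⟨fun _ => hj, fun _ => ?_⟩
      have hmem2 : j ∈ (Finset.range n).filter (fun j => X j ω < t) := by
        rw [hfa]; exact hj
      exact (Finset.mem_filter.mp hmem2).2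
  calc P {ω | (1:ℝ) ≤ empDF X n t ω}
      ≤ P {ω | ∀ j ∈ Finset.range n, (X j ω < t ↔ j ∈ Finset.range n)} := measure_mono hsub
    _ = ENNReal.ofReal (F t) ^ (Finset.range n).card
          * ENNReal.ofReal (1 - F t) ^ (n - (Finset.range n).card) :=
        meas_G hmeas hindep hdist hF (subset_refl _) t
    _ = ENNReal.ofReal (Real.exp (-(n:ℝ) * klB 1 (F t))) := by
        rw [Finset.card_range, Nat.sub_self, pow_zero, mul_one,
          ← ENNReal.ofReal_pow (F_nonneg hF t)]
        congr 1
        rw [klB_one, one_div, Real.log_inv]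
        rw [show -(n:ℝ) * -Real.log (F t) = (n:ℝ) * Real.log (F t) by ring,
          Real.exp_nat_mul, Real.exp_log hp0]

lemma chernoff_lower_zero (hmeas : ∀ i, Measurable (X i))
    (hindep : iIndepFun X P)
    (hdist : ∀ i, Measure.map (X i) P = μ)
    (hF : ∀ t, F t = (μ (Set.Iio t)).toReal) (n : ℕ) {t : ℝ} (hp1 : F t < 1) :
    P {ω | empDF X n t ω ≤ 0} ≤ ENNReal.ofReal (Real.exp (-(n:ℝ) * klB 0 (F t))) := by
  classical
  have hsub : {ω : Ω | empDF X n t ω ≤ 0}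
      ⊆ {ω | ∀ j ∈ Finset.range n, (X j ω < t ↔ j ∈ (∅ : Finset ℕ))} := by
    intro ω hω
    rw [Set.mem_setOf_eq] at hω
    have h0 := empDF_nonneg (X := X) n t ω
    have heq : empDF X n t ω = 0 := le_antisymm hω h0
    rw [empDF_eq_count] at heq
    intro j hj
    simp only [Finset.notMem_empty, iff_false]
    intro hlt
    rcases Nat.eq_zero_or_pos n with hn | hn
    · subst hn; simp at hj
    · have : (nCount X n t ω : ℝ) = 0 := by
        field_simp at heq
        exact_mod_cast heq
      have hc0 : nCount X n t ω = 0 := by exact_mod_cast this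
      have : (Finset.range n).filter (fun j => X j ω < t) = ∅ :=
        Finset.card_eq_zero.mp hc0
      have hjf : j ∈ (Finset.range n).filter (fun j => X j ω < t) :=
        Finset.mem_filter.mpr ⟨hj, hlt⟩
      rw [this] at hjf
      exact absurd hjf (Finset.notMem_empty j)
  calc P {ω | empDF X n t ω ≤ 0}
      ≤ P {ω | ∀ j ∈ Finset.range n, (X j ω < t ↔ j ∈ (∅ : Finset ℕ))} := measure_mono hsub
    _ = ENNReal.ofReal (F t) ^ (∅ : Finset ℕ).card
          * ENNReal.ofReal (1 - F t) ^ (n - (∅ : Finset ℕ).card) :=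
        meas_G hmeas hindep hdist hF (Finset.empty_subset _) t
    _ = ENNReal.ofReal (Real.exp (-(n:ℝ) * klB 0 (F t))) := by
        rw [Finset.card_empty, pow_zero, one_mul, Nat.sub_zero,
          ← ENNReal.ofReal_pow (by linarith [F_le_one hmeas hdist hF t] : (0:ℝ) ≤ 1 - F t)]
        congr 1
        rw [klB_zero, one_div, Real.log_inv]
        rw [show -(n:ℝ) * -Real.log (1 - F t) = (n:ℝ) * Real.log (1 - F t) by ring,
          Real.exp_nat_mul, Real.exp_log (by linarith)]

lemma F_tendsto_atTop (hmeas : ∀ i, Measurable (X i))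
    (hdist : ∀ i, Measure.map (X i) P = μ)
    (hF : ∀ t, F t = (μ (Set.Iio t)).toReal) : Filter.Tendsto F Filter.atTop (nhds 1) := by
  haveI hμ : IsProbabilityMeasure μ := by
    rw [← hdist 0]; exact Measure.isProbabilityMeasure_map (hmeas 0).aemeasurable
  have h1 : Filter.Tendsto (fun x : ℝ => (μ (Set.Iic x)).toReal) Filter.atTop (nhds 1) := by
    have h := tendsto_measure_Iic_atTop (μ := μ) (α := ℝ)
    rw [measure_univ] at h
    have := (ENNReal.tendsto_toReal (by simp : (1:ℝ≥0∞) ≠ ⊤)).comp h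
    simpa [Function.comp_def] using this
  have h2 : Filter.Tendsto (fun x : ℝ => (μ (Set.Iic (x - 1))).toReal) Filter.atTop (nhds 1) :=
    h1.comp (Filter.tendsto_atTop_add_const_right Filter.atTop (-1) Filter.tendsto_id)
  apply tendsto_of_tendsto_of_tendsto_of_le_of_le h2 tendsto_const_nhds
  · intro x
    rw [hF x]
    apply ENNReal.toReal_mono (measure_ne_top μ _)
    apply measure_mono
    intro y hy
    rw [Set.mem_Iic] at hy
    exact Set.mem_Iio.mpr (by linarith)
  · exact fun x => F_le_one hmeas hdist hF x

lemma F_tendsto_atBot (hmeas : ∀ i, Measurable (X i))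
    (hdist : ∀ i, Measure.map (X i) P = μ)
    (hF : ∀ t, F t = (μ (Set.Iio t)).toReal) : Filter.Tendsto F Filter.atBot (nhds 0) := by
  haveI hμ : IsProbabilityMeasure μ := by
    rw [← hdist 0]; exact Measure.isProbabilityMeasure_map (hmeas 0).aemeasurable
  have hx : ∀ x, F x = 1 - (μ (Set.Ici x)).toReal := by
    intro x
    rw [hF x, ← Set.compl_Ici, measure_compl measurableSet_Ici (measure_ne_top μ _),
      measure_univ, ENNReal.toReal_sub_of_le prob_le_one (by simp)]
    simp
  have h1 : Filter.Tendsto (fun x : ℝ => (μ (Set.Ici x)).toReal) Filter.atBot (nhds 1) := by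
    have h := tendsto_measure_Ici_atBot (μ := μ) (α := ℝ)
    rw [measure_univ] at h
    have := (ENNReal.tendsto_toReal (by simp : (1:ℝ≥0∞) ≠ ⊤)).comp h
    simpa [Function.comp_def] using this
  have := tendsto_const_nhds (x := (1:ℝ)) (f := Filter.atBot (α := ℝ)) |>.sub h1
  simp only [sub_self] at this
  apply this.congr
  intro x
  rw [hx x]

lemma exists_quantile (hmeas : ∀ i, Measurable (X i))
    (hdist : ∀ i, Measure.map (X i) P = μ)
    (hF : ∀ t, F t = (μ (Set.Iio t)).toReal) (hFcont : Continuous F)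
    {q : ℝ} (hq : q ∈ Set.Ioo (0:ℝ) 1) : ∃ x, F x = q := by
  obtain ⟨A, hA⟩ := ((F_tendsto_atBot hmeas hdist hF).eventually_lt_const hq.1).exists
  obtain ⟨B, hB⟩ := ((F_tendsto_atTop hmeas hdist hF).eventually_const_lt hq.2).exists
  have hAB : A ≤ B := by
    by_contra h
    push_neg at h
    have := F_mono hmeas hdist hF h.le
    linarith
  have := intermediate_value_Icc hAB hFcont.continuousOn
  obtain ⟨x, _, hxq⟩ := this ⟨hA.le, hB.le⟩
  exact ⟨x, hxq⟩

noncomputable def qMax (F : ℝ → ℝ) (q : ℝ) : ℝ := sSup {x | F x = q}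
noncomputable def qMin (F : ℝ → ℝ) (q : ℝ) : ℝ := sInf {x | F x = q}

lemma qMax_spec (hmeas : ∀ i, Measurable (X i))
    (hdist : ∀ i, Measure.map (X i) P = μ)
    (hF : ∀ t, F t = (μ (Set.Iio t)).toReal) (hFcont : Continuous F)
    {q : ℝ} (hq : q ∈ Set.Ioo (0:ℝ) 1) :
    F (qMax F q) = q ∧ ∀ x, F x ≤ q → x ≤ qMax F q := by
  obtain ⟨B, hB⟩ := ((F_tendsto_atTop hmeas hdist hF).eventually_const_lt hq.2).exists
  have hne : {x | F x = q}.Nonempty := exists_quantile hmeas hdist hF hFcont hq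
  have hbdd : BddAbove {x | F x = q} := by
    refine ⟨B, fun x hx => ?_⟩
    by_contra h
    push_neg at h
    have := F_mono hmeas hdist hF h.le
    rw [Set.mem_setOf_eq] at hx
    rw [hx] at this
    linarith
  have hclosed : IsClosed {x | F x = q} := isClosed_singleton.preimage hFcont
  have hmem : qMax F q ∈ {x | F x = q} := hclosed.csSup_mem hne hbdd
  refine ⟨hmem, fun x hx => ?_⟩
  by_contra h
  push_neg at h
  have h1 : F (qMax F q) ≤ F x := F_mono hmeas hdist hF h.le
  rw [hmem] at h1
  have : F x = q := le_antisymm hx h1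
  exact absurd (le_csSup hbdd this) (not_le.mpr h)

lemma qMin_spec (hmeas : ∀ i, Measurable (X i))
    (hdist : ∀ i, Measure.map (X i) P = μ)
    (hF : ∀ t, F t = (μ (Set.Iio t)).toReal) (hFcont : Continuous F)
    {q : ℝ} (hq : q ∈ Set.Ioo (0:ℝ) 1) :
    F (qMin F q) = q ∧ ∀ x, q ≤ F x → qMin F q ≤ x := by
  obtain ⟨A, hA⟩ := ((F_tendsto_atBot hmeas hdist hF).eventually_lt_const hq.1).exists
  have hne : {x | F x = q}.Nonempty := exists_quantile hmeas hdist hF hFcont hq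
  have hbdd : BddBelow {x | F x = q} := by
    refine ⟨A, fun x hx => ?_⟩
    by_contra h
    push_neg at h
    have := F_mono hmeas hdist hF h.le
    rw [Set.mem_setOf_eq] at hx
    rw [hx] at this
    linarith
  have hclosed : IsClosed {x | F x = q} := isClosed_singleton.preimage hFcont
  have hmem : qMin F q ∈ {x | F x = q} := hclosed.csInf_mem hne hbdd
  refine ⟨hmem, fun x hx => ?_⟩
  by_contra h
  push_neg at h
  have h1 : F x ≤ F (qMin F q) := F_mono hmeas hdist hF h.le
  rw [hmem] at h1
  have : F x = q := le_antisymm h1 hx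
  exact absurd (csInf_le hbdd this) (not_le.mpr h)

end Prob4
section Prob5
open MeasureTheory ProbabilityTheory
open scoped ENNReal
variable {Ω : Type*} [MeasurableSpace Ω] {P : Measure Ω} [IsProbabilityMeasure P]
  {X : ℕ → Ω → ℝ} {μ : Measure ℝ} {F : ℝ → ℝ}

lemma inclusionKS (hmeas : ∀ i, Measurable (X i))
    (hdist : ∀ i, Measure.map (X i) P = μ)
    (hF : ∀ t, F t = (μ (Set.Iio t)).toReal) (hFcont : Continuous F)
    {a : ℝ} (ha : 0 < a) (ha1 : a < 1) {n : ℕ} (hn : 0 < n) :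
    {ω : Ω | a < ⨆ t : ℝ, |empDF X n t ω - F t|} ⊆
      (⋃ i ∈ (Finset.Icc 1 n).filter (fun i : ℕ => a < (i:ℝ)/n),
        {ω | (i:ℝ)/n ≤ empDF X n (qMax F ((i:ℝ)/n - a)) ω}) ∪
      (⋃ i ∈ (Finset.range n).filter (fun i : ℕ => (i:ℝ)/n + a < 1),
        {ω | empDF X n (qMin F ((i:ℝ)/n + a)) ω ≤ (i:ℝ)/n}) := by
  intro ω hω
  rw [Set.mem_setOf_eq] at hω
  have hex : ∃ t, a < |empDF X n t ω - F t| := by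
    by_contra h
    push_neg at h
    exact absurd hω (not_lt.mpr (ciSup_le h))
  obtain ⟨t, ht⟩ := hex
  have hcount : empDF X n t ω = (nCount X n t ω : ℝ)/n := empDF_eq_count n t ω
  set i := nCount X n t ω with hidef
  have hin : i ≤ n := nCount_le n t ω
  have hinR : (i:ℝ)/n ≤ 1 := by
    rw [div_le_one (by positivity : (0:ℝ) < (n:ℝ))]
    exact_mod_cast hin
  have hinR0 : (0:ℝ) ≤ (i:ℝ)/n := by positivity
  have hFt0 : 0 ≤ F t := F_nonneg hF t
  have hFt1 : F t ≤ 1 := F_le_one hmeas hdist hF t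
  rcases lt_abs.mp ht with hpos | hneg
  · -- upper deviation
    left
    have h1 : a + F t < (i:ℝ)/n := by rw [hcount] at hpos; linarith
    have hpi0 : 0 < (i:ℝ)/n - a := by linarith
    have hpi : (i:ℝ)/n - a ∈ Set.Ioo (0:ℝ) 1 := ⟨hpi0, by linarith⟩
    obtain ⟨hFq, hmax⟩ := qMax_spec hmeas hdist hF hFcont hpi
    have hts : t ≤ qMax F ((i:ℝ)/n - a) := hmax t (by linarith)
    have hmono := empDF_mono (X := X) n hts ω
    rw [hcount] at hmono
    refine Set.mem_biUnion ?_ hmono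
    · show i ∈ (Finset.Icc 1 n).filter (fun i : ℕ => a < (i:ℝ)/n)
      rw [Finset.mem_filter, Finset.mem_Icc]
      refine ⟨⟨?_, hin⟩, by linarith⟩
      by_contra h
      push_neg at h
      interval_cases i
      simp at h1
      linarith
  · -- lower deviation
    right
    have h1 : (i:ℝ)/n + a < F t := by rw [hcount] at hneg; linarith
    have hq1 : (i:ℝ)/n + a < 1 := lt_of_lt_of_le h1 hFt1
    have hq0 : 0 < (i:ℝ)/n + a := by linarith
    obtain ⟨hFq, hmin⟩ := qMin_spec hmeas hdist hF hFcont ⟨hq0, hq1⟩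
    have hts : qMin F ((i:ℝ)/n + a) ≤ t := by
      exact hmin t h1.le
    have hmono := empDF_mono (X := X) n hts ω
    rw [hcount] at hmono
    refine Set.mem_biUnion ?_ hmono
    · show i ∈ (Finset.range n).filter (fun i : ℕ => (i:ℝ)/n + a < 1)
      rw [Finset.mem_filter, Finset.mem_range]
      refine ⟨?_, hq1⟩
      have : (i:ℝ)/n < 1 := by linarith
      rw [div_lt_one (by positivity : (0:ℝ) < (n:ℝ))] at this
      exact_mod_cast this

end Prob5
section Prob6
open MeasureTheory ProbabilityTheory
open scoped ENNReal
variable {Ω : Type*} [MeasurableSpace Ω] {P : Measure Ω} [IsProbabilityMeasure P]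
  {X : ℕ → Ω → ℝ} {μ : Measure ℝ} {F : ℝ → ℝ}

lemma upper_prob_bound (hmeas : ∀ i, Measurable (X i))
    (hindep : iIndepFun X P)
    (hdist : ∀ i, Measure.map (X i) P = μ)
    (hF : ∀ t, F t = (μ (Set.Iio t)).toReal) (hFcont : Continuous F)
    {a : ℝ} (ha : 0 < a) (ha1 : a < 1) {n : ℕ} (hn : 0 < n) :
    P {ω | a < ⨆ t : ℝ, |empDF X n t ω - F t|}
      ≤ (2 * n : ℝ≥0∞) * ENNReal.ofReal (Real.exp (-(n:ℝ) * f0R a)) := by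
  classical
  set c := ENNReal.ofReal (Real.exp (-(n:ℝ) * f0R a)) with hcdef
  have hnR : (0:ℝ) < n := by positivity
  -- bound for the first family
  have hC : ∀ i ∈ (Finset.Icc 1 n).filter (fun i : ℕ => a < (i:ℝ)/n),
      P {ω | (i:ℝ)/n ≤ empDF X n (qMax F ((i:ℝ)/n - a)) ω} ≤ c := by
    intro i hi
    rw [Finset.mem_filter, Finset.mem_Icc] at hi
    obtain ⟨⟨hi1, hi2⟩, hia⟩ := hi
    have hinR : (i:ℝ)/n ≤ 1 := by
      rw [div_le_one hnR]; exact_mod_cast hi2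
    have hpi : (i:ℝ)/n - a ∈ Set.Ioo (0:ℝ) 1 := ⟨by linarith, by linarith⟩
    obtain ⟨hFq, _⟩ := qMax_spec hmeas hdist hF hFcont hpi
    have hklb : f0R a ≤ klB ((i:ℝ)/n) ((i:ℝ)/n - a) := by
      have := f0R_le ha ha1 (t := (i:ℝ)/n - a) ⟨hpi.1, by linarith⟩
      rwa [show a + ((i:ℝ)/n - a) = (i:ℝ)/n by ring] at this
    have hexp : Real.exp (-(n:ℝ) * klB ((i:ℝ)/n) ((i:ℝ)/n - a))
        ≤ Real.exp (-(n:ℝ) * f0R a) := by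
      rw [Real.exp_le_exp]
      have : (0:ℝ) ≤ (n:ℝ) := hnR.le
      nlinarith
    rcases lt_or_eq_of_le hinR with hlt | heq
    · have hbound := chernoff_upper' hmeas hindep hdist hF n
        (t := qMax F ((i:ℝ)/n - a)) (q := (i:ℝ)/n)
        (by rw [hFq]; exact hpi.1) (by rw [hFq]; exact hpi.2) (by rw [hFq]; linarith) hlt
      rw [hFq] at hbound
      exact hbound.trans (ENNReal.ofReal_le_ofReal hexp)
    · have hbound := chernoff_upper_one hmeas hindep hdist hF n
        (t := qMax F ((i:ℝ)/n - a)) (by rw [hFq]; exact hpi.1)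
      rw [hFq] at hbound
      have hev : {ω : Ω | (i:ℝ)/n ≤ empDF X n (qMax F ((i:ℝ)/n - a)) ω}
          = {ω : Ω | (1:ℝ) ≤ empDF X n (qMax F ((i:ℝ)/n - a)) ω} := by rw [← heq]
      rw [hev]
      refine hbound.trans (ENNReal.ofReal_le_ofReal ?_)
      have h5 : klB 1 ((i:ℝ)/n - a) = klB ((i:ℝ)/n) ((i:ℝ)/n - a) := by rw [heq]
      rw [h5]
      exact hexp
  have hD : ∀ i ∈ (Finset.range n).filter (fun i : ℕ => (i:ℝ)/n + a < 1),
      P {ω | empDF X n (qMin F ((i:ℝ)/n + a)) ω ≤ (i:ℝ)/n} ≤ c := by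
    intro i hi
    rw [Finset.mem_filter, Finset.mem_range] at hi
    obtain ⟨hi1, hia⟩ := hi
    have hi0 : (0:ℝ) ≤ (i:ℝ)/n := by positivity
    have hq : (i:ℝ)/n + a ∈ Set.Ioo (0:ℝ) 1 := ⟨by linarith, hia⟩
    obtain ⟨hFq, _⟩ := qMin_spec hmeas hdist hF hFcont hq
    have hklb : f0R a ≤ klB ((i:ℝ)/n) ((i:ℝ)/n + a) := by
      rw [klB_symm]
      have := f0R_le ha ha1 (t := 1 - ((i:ℝ)/n + a)) ⟨by linarith, by linarith⟩
      rwa [show a + (1 - ((i:ℝ)/n + a)) = 1 - (i:ℝ)/n by ring] at this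
    have hexp : Real.exp (-(n:ℝ) * klB ((i:ℝ)/n) ((i:ℝ)/n + a))
        ≤ Real.exp (-(n:ℝ) * f0R a) := by
      rw [Real.exp_le_exp]
      have : (0:ℝ) ≤ (n:ℝ) := hnR.le
      nlinarith
    rcases Nat.eq_zero_or_pos i with hi0' | hi0'
    · subst hi0'
      have hz : ((0:ℕ):ℝ)/n = 0 := by simp
      have hbound := chernoff_lower_zero hmeas hindep hdist hF n
        (t := qMin F (((0:ℕ):ℝ)/n + a)) (by rw [hFq]; exact hq.2)
      rw [hFq] at hbound
      have hev : {ω : Ω | empDF X n (qMin F (((0:ℕ):ℝ)/n + a)) ω ≤ ((0:ℕ):ℝ)/n}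
          = {ω : Ω | empDF X n (qMin F (((0:ℕ):ℝ)/n + a)) ω ≤ 0} := by rw [hz]
      rw [hev]
      refine hbound.trans (ENNReal.ofReal_le_ofReal ?_)
      rw [hz] at hexp ⊢
      exact hexp
    · have hbound := chernoff_lower' hmeas hindep hdist hF n
        (t := qMin F ((i:ℝ)/n + a)) (q := (i:ℝ)/n)
        (by rw [hFq]; exact hq.1) (by rw [hFq]; exact hq.2)
        (by positivity : (0:ℝ) < (i:ℝ)/n) (by rw [hFq]; linarith)
      rw [hFq] at hbound
      exact hbound.trans (ENNReal.ofReal_le_ofReal hexp)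
  calc P {ω | a < ⨆ t : ℝ, |empDF X n t ω - F t|}
      ≤ P ((⋃ i ∈ (Finset.Icc 1 n).filter (fun i : ℕ => a < (i:ℝ)/n),
          {ω | (i:ℝ)/n ≤ empDF X n (qMax F ((i:ℝ)/n - a)) ω}) ∪
        (⋃ i ∈ (Finset.range n).filter (fun i : ℕ => (i:ℝ)/n + a < 1),
          {ω | empDF X n (qMin F ((i:ℝ)/n + a)) ω ≤ (i:ℝ)/n})) :=
        measure_mono (inclusionKS hmeas hdist hF hFcont ha ha1 hn)
    _ ≤ P (⋃ i ∈ (Finset.Icc 1 n).filter (fun i : ℕ => a < (i:ℝ)/n),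
          {ω | (i:ℝ)/n ≤ empDF X n (qMax F ((i:ℝ)/n - a)) ω})
        + P (⋃ i ∈ (Finset.range n).filter (fun i : ℕ => (i:ℝ)/n + a < 1),
          {ω | empDF X n (qMin F ((i:ℝ)/n + a)) ω ≤ (i:ℝ)/n}) := measure_union_le _ _
    _ ≤ (∑ i ∈ (Finset.Icc 1 n).filter (fun i : ℕ => a < (i:ℝ)/n),
          P {ω | (i:ℝ)/n ≤ empDF X n (qMax F ((i:ℝ)/n - a)) ω})
        + ∑ i ∈ (Finset.range n).filter (fun i : ℕ => (i:ℝ)/n + a < 1),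
          P {ω | empDF X n (qMin F ((i:ℝ)/n + a)) ω ≤ (i:ℝ)/n} :=
        add_le_add (measure_biUnion_finset_le _ _) (measure_biUnion_finset_le _ _)
    _ ≤ (∑ _i ∈ (Finset.Icc 1 n).filter (fun i : ℕ => a < (i:ℝ)/n), c)
        + ∑ _i ∈ (Finset.range n).filter (fun i : ℕ => (i:ℝ)/n + a < 1), c :=
        add_le_add (Finset.sum_le_sum hC) (Finset.sum_le_sum hD)
    _ ≤ (n : ℝ≥0∞) * c + (n : ℝ≥0∞) * c := by
        rw [Finset.sum_const, Finset.sum_const, nsmul_eq_mul, nsmul_eq_mul]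
        apply add_le_add
        · apply mul_le_mul_left
          have h1 : ((Finset.Icc 1 n).filter (fun i : ℕ => a < (i:ℝ)/n)).card ≤ n := by
            calc _ ≤ (Finset.Icc 1 n).card := Finset.card_filter_le _ _
              _ = n := by rw [Nat.card_Icc]; omega
          exact_mod_cast h1
        · apply mul_le_mul_left
          have h1 : ((Finset.range n).filter (fun i : ℕ => (i:ℝ)/n + a < 1)).card ≤ n := by
            calc _ ≤ (Finset.range n).card := Finset.card_filter_le _ _
              _ = n := Finset.card_range n
          exact_mod_cast h1
    _ = (2 * n : ℝ≥0∞) * c := by ring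

lemma lower_prob_bound (hmeas : ∀ i, Measurable (X i))
    (hindep : iIndepFun X P)
    (hdist : ∀ i, Measure.map (X i) P = μ)
    (hF : ∀ t, F t = (μ (Set.Iio t)).toReal) (hFcont : Continuous F)
    {a t₀ : ℝ} (ha : 0 < a) (ht₀ : t₀ ∈ Set.Ioo 0 (1 - a)) {n : ℕ}
    (hkn : ⌊(n:ℝ) * (a + t₀)⌋₊ + 1 < n) :
    ENNReal.ofReal (1/((n:ℝ)+1)
        * Real.exp (-(n:ℝ) * klB (((⌊(n:ℝ) * (a + t₀)⌋₊ + 1 : ℕ):ℝ)/n) t₀))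
      ≤ P {ω | a < ⨆ t : ℝ, |empDF X n t ω - F t|} := by
  classical
  obtain ⟨ht₀0, ht₀1⟩ := ht₀
  have ha1 : t₀ + a < 1 := by linarith
  set k : ℕ := ⌊(n:ℝ) * (a + t₀)⌋₊ + 1 with hkdef
  have hk0 : 0 < k := Nat.succ_pos _
  have hn : 0 < n := lt_trans hk0 hkn
  have hnR : (0:ℝ) < n := by positivity
  have ht₀Ioo : t₀ ∈ Set.Ioo (0:ℝ) 1 := ⟨ht₀0, by linarith⟩
  obtain ⟨hFq, _⟩ := qMax_spec hmeas hdist hF hFcont ht₀Ioo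
  set s₀ := qMax F t₀ with hs₀
  have hklow : (n:ℝ) * (a + t₀) < k := by
    exact_mod_cast Nat.lt_floor_add_one ((n:ℝ) * (a + t₀))
  have hkR : a + t₀ < (k:ℝ)/n := by
    rw [lt_div_iff₀ hnR]
    linarith [hklow]
  -- inclusion of the single-count event
  have hsub : {ω : Ω | nCount X n s₀ ω = k} ⊆ {ω | a < ⨆ t : ℝ, |empDF X n t ω - F t|} := by
    intro ω hω
    rw [Set.mem_setOf_eq] at hω ⊢
    have hval : empDF X n s₀ ω = (k:ℝ)/n := by
      rw [empDF_eq_count, hω]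
    have h1 : a < empDF X n s₀ ω - F s₀ := by
      rw [hval, hFq]
      linarith
    have h2 : empDF X n s₀ ω - F s₀ ≤ |empDF X n s₀ ω - F s₀| := le_abs_self _
    have h3 : |empDF X n s₀ ω - F s₀| ≤ ⨆ t : ℝ, |empDF X n t ω - F t| :=
      le_ciSup (bddAbove_dev (X := X) n ω (F_nonneg hF)
        (fun t => F_le_one hmeas hdist hF t)) s₀
    linarith
  have hpmf := meas_count_eq hmeas hindep hdist hF (n := n) (k := k) s₀
  rw [hFq] at hpmf
  have hofreal : P {ω | nCount X n s₀ ω = k}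
      = ENNReal.ofReal ((n.choose k : ℝ) * t₀^k * (1 - t₀)^(n-k)) := by
    rw [hpmf, ENNReal.ofReal_mul (by positivity), ENNReal.ofReal_mul (by positivity),
      ENNReal.ofReal_pow ht₀0.le, ENNReal.ofReal_pow (by linarith : (0:ℝ) ≤ 1 - t₀),
      ENNReal.ofReal_natCast]
    ring
  calc ENNReal.ofReal (1/((n:ℝ)+1) * Real.exp (-(n:ℝ) * klB ((k:ℝ)/n) t₀))
      ≤ ENNReal.ofReal ((n.choose k : ℝ) * t₀^k * (1 - t₀)^(n-k)) :=
        ENNReal.ofReal_le_ofReal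
          (binom_lower ht₀0 (by linarith) hk0 hkn)
    _ = P {ω | nCount X n s₀ ω = k} := hofreal.symm
    _ ≤ P {ω | a < ⨆ t : ℝ, |empDF X n t ω - F t|} := measure_mono hsub

end Prob6
section Assemble
open MeasureTheory ProbabilityTheory Filter
open scoped ENNReal Topology

variable {Ω : Type*} [MeasurableSpace Ω] {P : Measure Ω} [IsProbabilityMeasure P]
  {X : ℕ → Ω → ℝ} {μ : Measure ℝ} {F : ℝ → ℝ}

theorem mainKS (hmeas : ∀ i, Measurable (X i))
    (hindep : iIndepFun X P)
    (hdist : ∀ i, Measure.map (X i) P = μ)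
    (hF : ∀ t, F t = (μ (Set.Iio t)).toReal) (hFcont : Continuous F)
    {a : ℝ} (ha : a ∈ Set.Ioo (0:ℝ) 1) :
    Tendsto (fun n : ℕ => ((n : ℝ)⁻¹ : EReal) *
        ENNReal.log (P {ω | a < ⨆ t : ℝ, |empDF X n t ω - F t|}))
      atTop (𝓝 (((-(f0R a) : ℝ) : EReal))) := by
  obtain ⟨ha0, ha1⟩ := ha
  set L := f0R a with hLdef
  set E : ℕ → Set Ω := fun n => {ω | a < ⨆ t : ℝ, |empDF X n t ω - F t|} with hEdef
  set x : ℕ → ℝ := fun n => (n:ℝ)⁻¹ * Real.log ((P (E n)).toReal) with hxdef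
  have hevk : ∀ t : ℝ, t ∈ Set.Ioo (0:ℝ) (1 - a) →
      ∀ᶠ n : ℕ in atTop, ⌊(n:ℝ) * (a + t)⌋₊ + 1 < n := by
    intro t ht
    have hlim : Tendsto (fun n : ℕ => (n:ℝ) * (1 - a - t)) atTop atTop :=
      Tendsto.atTop_mul_const (by linarith [ht.2] : (0:ℝ) < 1 - a - t)
        tendsto_natCast_atTop_atTop
    filter_upwards [hlim.eventually_ge_atTop 2] with n hn
    have h3 : (⌊(n:ℝ)*(a+t)⌋₊ : ℝ) ≤ (n:ℝ)*(a+t) :=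
      Nat.floor_le (mul_nonneg (Nat.cast_nonneg n) (by linarith [ht.1]))
    have h4 : ((⌊(n:ℝ)*(a+t)⌋₊ + 1 : ℕ) : ℝ) < n := by push_cast; linarith
    exact_mod_cast h4
  have hlow : ∀ t : ℝ, t ∈ Set.Ioo (0:ℝ) (1 - a) →
      ∀ᶠ n : ℕ in atTop,
        1/((n:ℝ)+1) * Real.exp (-(n:ℝ) * klB (((⌊(n:ℝ)*(a+t)⌋₊+1 : ℕ):ℝ)/n) t)
          ≤ (P (E n)).toReal := by
    intro t ht
    filter_upwards [hevk t ht] with n hn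
    have hb := lower_prob_bound hmeas hindep hdist hF hFcont ha0 ht hn
    rw [ENNReal.ofReal_le_iff_le_toReal (measure_ne_top P _)] at hb
    exact hb
  have ht1 : (1-a)/2 ∈ Set.Ioo (0:ℝ) (1 - a) := ⟨by linarith, by linarith⟩
  have hpos : ∀ᶠ n : ℕ in atTop, 0 < (P (E n)).toReal := by
    filter_upwards [hlow _ ht1, eventually_gt_atTop 0] with n hn hn0
    have hh : (0:ℝ) < 1/((n:ℝ)+1) * Real.exp (-(n:ℝ) *
        klB (((⌊(n:ℝ)*(a+(1-a)/2)⌋₊+1 : ℕ):ℝ)/n) ((1-a)/2)) := by positivity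
    linarith
  have hcong : (fun n : ℕ => ((n : ℝ)⁻¹ : EReal) * ENNReal.log (P (E n)))
      =ᶠ[atTop] (fun n : ℕ => ((x n : ℝ) : EReal)) := by
    filter_upwards [hpos] with n hn
    rw [ENNReal.log_pos_real' hn, ← EReal.coe_inv, ← EReal.coe_mul]
  have hxT : Tendsto x atTop (𝓝 (-L)) := by
    rw [Metric.tendsto_atTop]
    intro ε hε
    have hup : ∀ᶠ n : ℕ in atTop, x n ≤ -L + (n:ℝ)⁻¹ * Real.log (2*(n:ℝ)) := by
      filter_upwards [hpos, eventually_gt_atTop 0] with n hposn hn0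
      have hnR : (0:ℝ) < n := by exact_mod_cast hn0
      have hub := upper_prob_bound hmeas hindep hdist hF hFcont ha0 ha1 hn0
      have hfin : ((2 * n : ℝ≥0∞) * ENNReal.ofReal (Real.exp (-(n:ℝ)*L))) ≠ ⊤ :=
        ENNReal.mul_ne_top (ENNReal.mul_ne_top (by simp) (ENNReal.natCast_ne_top n))
          ENNReal.ofReal_ne_top
      have hub' : (P (E n)).toReal ≤ 2*(n:ℝ) * Real.exp (-(n:ℝ)*L) := by
        have h2 : ((2 * n : ℝ≥0∞) * ENNReal.ofReal (Real.exp (-(n:ℝ)*L))).toReal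
            = 2*(n:ℝ)*Real.exp (-(n:ℝ)*L) := by
          rw [ENNReal.toReal_mul, ENNReal.toReal_mul,
            ENNReal.toReal_ofReal (Real.exp_nonneg _)]
          simp
        calc (P (E n)).toReal
            ≤ ((2*n : ℝ≥0∞) * ENNReal.ofReal (Real.exp (-(n:ℝ)*L))).toReal :=
              ENNReal.toReal_mono hfin hub
          _ = _ := h2
      have hlog : Real.log ((P (E n)).toReal) ≤ Real.log (2*(n:ℝ)) + (-(n:ℝ)*L) := by
        calc Real.log ((P (E n)).toReal)
            ≤ Real.log (2*(n:ℝ)*Real.exp (-(n:ℝ)*L)) := Real.log_le_log hposn hub'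
          _ = Real.log (2*(n:ℝ)) + (-(n:ℝ)*L) := by
              rw [Real.log_mul (by positivity) (Real.exp_ne_zero _), Real.log_exp]
      calc x n = (n:ℝ)⁻¹ * Real.log ((P (E n)).toReal) := rfl
        _ ≤ (n:ℝ)⁻¹ * (Real.log (2*(n:ℝ)) + (-(n:ℝ)*L)) :=
            mul_le_mul_of_nonneg_left hlog (by positivity)
        _ = -L + (n:ℝ)⁻¹ * Real.log (2*(n:ℝ)) := by field_simp; ring
    have hlog0 : Tendsto (fun n : ℕ => (n:ℝ)⁻¹ * Real.log (2*(n:ℝ))) atTop (𝓝 0) := by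
      have h := Real.isLittleO_log_id_atTop.tendsto_div_nhds_zero
      have h2 : Tendsto (fun n : ℕ => 2*(n:ℝ)) atTop atTop :=
        Tendsto.const_mul_atTop (by norm_num) tendsto_natCast_atTop_atTop
      have h3 := (h.comp h2).const_mul (2:ℝ)
      rw [mul_zero] at h3
      apply h3.congr'
      filter_upwards [eventually_gt_atTop 0] with n hn0
      have hnR : (0:ℝ) < n := by exact_mod_cast hn0
      simp only [Function.comp, id]
      field_simp
    have hlog1 : Tendsto (fun n : ℕ => (n:ℝ)⁻¹ * Real.log ((n:ℝ)+1)) atTop (𝓝 0) := by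
      apply tendsto_of_tendsto_of_tendsto_of_le_of_le' tendsto_const_nhds hlog0
      · filter_upwards with n
        have h1n : (0:ℝ) ≤ n := Nat.cast_nonneg n
        exact mul_nonneg (by positivity) (Real.log_nonneg (by linarith))
      · filter_upwards [eventually_ge_atTop 1] with n hn1
        have hnR : (1:ℝ) ≤ n := by exact_mod_cast hn1
        apply mul_le_mul_of_nonneg_left _ (by positivity)
        apply Real.log_le_log (by positivity)
        linarith
    obtain ⟨t1, ht1', hklb1⟩ := f0R_exists_near ha0 ha1 (half_pos hε)
    have hkqT : Tendsto (fun n : ℕ => ((⌊(n:ℝ)*(a+t1)⌋₊+1 : ℕ):ℝ)/n) atTop (𝓝 (a + t1)) := by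
      apply tendsto_of_tendsto_of_tendsto_of_le_of_le' (g := fun _ : ℕ => a + t1)
        (h := fun n : ℕ => (a + t1) + (n:ℝ)⁻¹) tendsto_const_nhds ?_ ?_ ?_
      · have hinv : Tendsto (fun n : ℕ => (n:ℝ)⁻¹) atTop (𝓝 0) :=
          tendsto_inv_atTop_zero.comp tendsto_natCast_atTop_atTop
        have := (tendsto_const_nhds (x := a + t1) (f := (atTop : Filter ℕ))).add hinv
        simpa using this
      · filter_upwards [eventually_gt_atTop 0] with n hn0
        have hnR : (0:ℝ) < n := by exact_mod_cast hn0
        have hkl : (n:ℝ)*(a+t1) < ((⌊(n:ℝ)*(a+t1)⌋₊ : ℕ):ℝ) + 1 :=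
          Nat.lt_floor_add_one ((n:ℝ)*(a+t1))
        rw [le_div_iff₀ hnR]
        push_cast
        linarith
      · filter_upwards [eventually_gt_atTop 0] with n hn0
        have hnR : (0:ℝ) < n := by exact_mod_cast hn0
        have hfl : (⌊(n:ℝ)*(a+t1)⌋₊ : ℝ) ≤ (n:ℝ)*(a+t1) :=
          Nat.floor_le (mul_nonneg hnR.le (by linarith [ht1'.1]))
        rw [div_le_iff₀ hnR]
        push_cast
        have : ((a + t1) + (n:ℝ)⁻¹) * n = (n:ℝ)*(a+t1) + 1 := by field_simp
        rw [this]
        linarith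
    have hklbT : Tendsto (fun n : ℕ => klB (((⌊(n:ℝ)*(a+t1)⌋₊+1 : ℕ):ℝ)/n) t1) atTop
        (𝓝 (klB (a + t1) t1)) := by
      have hc : ContinuousAt (fun q => klB q t1) (a + t1) :=
        continuousAt_klB_left ht1'.1 (by linarith [ht1'.2]) (by linarith [ht1'.1])
          (by linarith [ht1'.2])
      exact hc.tendsto.comp hkqT
    have hlowev : ∀ᶠ n : ℕ in atTop,
        -((n:ℝ)⁻¹ * Real.log ((n:ℝ)+1)) - klB (((⌊(n:ℝ)*(a+t1)⌋₊+1 : ℕ):ℝ)/n) t1 ≤ x n := by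
      filter_upwards [hlow t1 ht1', hpos, eventually_gt_atTop 0] with n hlb hposn hn0
      have hnR : (0:ℝ) < n := by exact_mod_cast hn0
      have hlog : -Real.log ((n:ℝ)+1) + (-(n:ℝ) * klB (((⌊(n:ℝ)*(a+t1)⌋₊+1 : ℕ):ℝ)/n) t1)
          ≤ Real.log ((P (E n)).toReal) := by
        have h5 : Real.log (1/((n:ℝ)+1)
            * Real.exp (-(n:ℝ) * klB (((⌊(n:ℝ)*(a+t1)⌋₊+1 : ℕ):ℝ)/n) t1))
            ≤ Real.log ((P (E n)).toReal) := Real.log_le_log (by positivity) hlb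
        rwa [Real.log_mul (by positivity) (Real.exp_ne_zero _), Real.log_exp,
          one_div, Real.log_inv] at h5
      calc -((n:ℝ)⁻¹ * Real.log ((n:ℝ)+1)) - klB (((⌊(n:ℝ)*(a+t1)⌋₊+1 : ℕ):ℝ)/n) t1
          = (n:ℝ)⁻¹ * (-Real.log ((n:ℝ)+1)
              + (-(n:ℝ) * klB (((⌊(n:ℝ)*(a+t1)⌋₊+1 : ℕ):ℝ)/n) t1)) := by
            field_simp
            ring
        _ ≤ (n:ℝ)⁻¹ * Real.log ((P (E n)).toReal) :=
            mul_le_mul_of_nonneg_left hlog (by positivity)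
        _ = x n := rfl
    have hev3 : ∀ᶠ n : ℕ in atTop, (n:ℝ)⁻¹ * Real.log (2*(n:ℝ)) < ε :=
      hlog0.eventually_lt_const hε
    have hev4 : ∀ᶠ n : ℕ in atTop, (n:ℝ)⁻¹ * Real.log ((n:ℝ)+1) < ε/4 :=
      hlog1.eventually_lt_const (by linarith)
    have hev5 : ∀ᶠ n : ℕ in atTop,
        klB (((⌊(n:ℝ)*(a+t1)⌋₊+1 : ℕ):ℝ)/n) t1 < L + ε/2 :=
      hklbT.eventually_lt_const (by linarith)
    have hfinal : ∀ᶠ n : ℕ in atTop, dist (x n) (-L) < ε := by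
      filter_upwards [hup, hlowev, hev3, hev4, hev5] with n h1 h2 h3 h4 h5
      rw [Real.dist_eq, abs_sub_lt_iff]
      constructor
      · linarith
      · linarith
    rw [eventually_atTop] at hfinal
    exact hfinal
  have hET := EReal.tendsto_coe.mpr hxT
  exact hET.congr' hcong.symm

end Assemble

lemma fKS_eq_klB {a t : ℝ} (ht : t ≤ 1 - a) : fKS a t = ((klB (a + t) t : ℝ) : EReal) := by
  unfold fKS
  rw [if_pos ht]
  have h : (a + t) * Real.log ((a + t) / t) + (1 - a - t) * Real.log ((1 - a - t) / (1 - t))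
      = klB (a + t) t := by
    unfold klB
    rw [show (1:ℝ) - (a + t) = 1 - a - t by ring]
  exact congrArg _ h

lemma f0KS_eq {a : ℝ} (ha : 0 < a) (ha1 : a < 1) : f0KS a = ((f0R a : ℝ) : EReal) := by
  apply le_antisymm
  · by_contra h
    push_neg at h
    obtain ⟨c, hc1, hc2⟩ := EReal.exists_between_coe_real h
    have hfc : f0R a < c := by exact_mod_cast hc1
    obtain ⟨t, ht, hklb⟩ := f0R_exists_near ha ha1 (show (0:ℝ) < c - f0R a by linarith)
    have hle : f0KS a ≤ fKS a t :=
      iInf₂_le t (show t ∈ Set.Ioo (0:ℝ) 1 from ⟨ht.1, by linarith [ht.2]⟩)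
    rw [fKS_eq_klB (le_of_lt ht.2)] at hle
    have h2 : ((klB (a+t) t : ℝ) : EReal) < ((c:ℝ) : EReal) := by
      exact_mod_cast (show klB (a+t) t < c by linarith)
    exact absurd hc2 (not_lt.mpr (hle.trans h2.le))
  · refine le_iInf₂ fun t ht => ?_
    rcases le_or_gt t (1 - a) with hle | hgt
    · rw [fKS_eq_klB hle]
      exact_mod_cast f0R_le ha ha1 ⟨ht.1, hle⟩
    · unfold fKS
      rw [if_neg (not_le.mpr hgt)]
      exact le_top


/-- Large deviations of the Kolmogorov statistic
`Dₙ = sup_t |Fₙ(t) − F(t)|` for i.i.d. observations with continuous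
distribution function `F`: for every `a ∈ (0,1)`,
`lim_{n→∞} n⁻¹ ln P(Dₙ > a) = −f₀(a)`. -/
theorem statement_0 {Ω : Type*} [MeasurableSpace Ω] (P : Measure Ω)
    [IsProbabilityMeasure P]
    (X : ℕ → Ω → ℝ) (hmeas : ∀ i, Measurable (X i))
    (hindep : iIndepFun X P)
    (μ : Measure ℝ) (hdist : ∀ i, Measure.map (X i) P = μ)
    (F : ℝ → ℝ) (hF : ∀ t, F t = (μ (Set.Iio t)).toReal)
    (hFcont : Continuous F)
    (a : ℝ) (ha : a ∈ Set.Ioo (0 : ℝ) 1) :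
    Tendsto (fun n : ℕ => ((n : ℝ)⁻¹ : EReal) *
        ENNReal.log (P {ω | a < ⨆ t : ℝ, |empDF X n t ω - F t|}))
      atTop (𝓝 (-f0KS a)) := by
  have h := mainKS hmeas hindep hdist hF hFcont ha
  rw [f0KS_eq ha.1 ha.2, ← EReal.coe_neg]
  exact h
end
end

section
/- For 0 < a < 1 define f(a,t) = (a+t)·ln((a+t)/t) + (1−a−t)·ln((1−a−t)/(1−t)) for 0 < t ≤ 1−a (with the limiting value at t = 0), f(a,t) = +∞ for 1−a < t ≤ 1, and f₀(a) = inf_{0<t<1} f(a,t). Then the function f₀ is continuous on (0,1), and f₀(a) = 2a²(1+o(1)) as a → 0+, i.e., lim_{a→0+} f₀(a)/a² = 2. -/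
open Filter Set Topology

noncomputable section

def realF (a t : ℝ) : ℝ :=
  (a + t) * Real.log ((a + t) / t) + (1 - a - t) * Real.log ((1 - a - t) / (1 - t))

lemma fKS_of_le {a t : ℝ} (h : t ≤ 1 - a) : fKS a t = ((realF a t : ℝ) : EReal) := if_pos h

lemma fKS_of_gt {a t : ℝ} (h : ¬ t ≤ 1 - a) : fKS a t = ⊤ := if_neg h

lemma mono_aux {f f' : ℝ → ℝ} {a b : ℝ} (hab : a ≤ b)
    (hd : ∀ x ∈ Icc a b, HasDerivAt f (f' x) x)
    (h0 : ∀ x ∈ Icc a b, 0 ≤ f' x) : f a ≤ f b := by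
  have hm : MonotoneOn f (Icc a b) := by
    apply monotoneOn_of_deriv_nonneg (convex_Icc a b)
      (fun x hx => (hd x hx).continuousAt.continuousWithinAt)
    · intro x hx
      rw [interior_Icc] at hx
      exact (hd x (Ioo_subset_Icc_self hx)).differentiableAt.differentiableWithinAt
    · intro x hx
      rw [interior_Icc] at hx
      rw [(hd x (Ioo_subset_Icc_self hx)).deriv]
      exact h0 x (Ioo_subset_Icc_self hx)
  exact hm (left_mem_Icc.2 hab) (right_mem_Icc.2 hab) hab

lemma log_sum {x1 x2 y1 y2 : ℝ} (hx1 : 0 ≤ x1) (hx2 : 0 ≤ x2) (hy1 : 0 < y1) (hy2 : 0 < y2) :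
    (x1 + x2) * Real.log ((x1 + x2) / (y1 + y2)) ≤
      x1 * Real.log (x1 / y1) + x2 * Real.log (x2 / y2) := by
  have hT : 0 < y1 + y2 := by linarith
  rcases eq_or_lt_of_le hx1 with h1 | h1
  · rcases eq_or_lt_of_le hx2 with h2 | h2
    · simp [← h1, ← h2]
    · simp only [← h1, zero_add, zero_mul]
      have : Real.log (x2 / (y1 + y2)) ≤ Real.log (x2 / y2) := by
        apply Real.log_le_log (by positivity)
        exact div_le_div_of_nonneg_left h2.le hy2 (by linarith)
      nlinarith
  · rcases eq_or_lt_of_le hx2 with h2 | h2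
    · simp only [← h2, add_zero, zero_mul]
      have : Real.log (x1 / (y1 + y2)) ≤ Real.log (x1 / y1) := by
        apply Real.log_le_log (by positivity)
        exact div_le_div_of_nonneg_left h1.le hy1 (by linarith)
      nlinarith
    · have hS : 0 < x1 + x2 := by linarith
      have key : ∀ x y : ℝ, 0 < x → 0 < y →
          x - y * (x1 + x2) / (y1 + y2) ≤
            x * Real.log (x / y) - x * Real.log ((x1 + x2) / (y1 + y2)) := by
        intro x y hx hy
        have hz : (0:ℝ) < (x / y) / ((x1 + x2) / (y1 + y2)) := by positivity
        have hlog := Real.one_sub_inv_le_log_of_pos hz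
        have heq : Real.log ((x / y) / ((x1 + x2) / (y1 + y2))) =
            Real.log (x / y) - Real.log ((x1 + x2) / (y1 + y2)) :=
          Real.log_div (by positivity) (by positivity)
        rw [heq] at hlog
        have hinv : ((x / y) / ((x1 + x2) / (y1 + y2)))⁻¹ = y * (x1 + x2) / (y1 + y2) / x := by
          field_simp
        rw [hinv] at hlog
        have := mul_le_mul_of_nonneg_left hlog hx.le
        calc x - y * (x1 + x2) / (y1 + y2)
            = x * (1 - y * (x1 + x2) / (y1 + y2) / x) := by field_simp
          _ ≤ x * (Real.log (x / y) - Real.log ((x1 + x2) / (y1 + y2))) := this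
          _ = _ := by ring
      have k1 := key x1 y1 h1 hy1
      have k2 := key x2 y2 h2 hy2
      have hsum : x1 - y1 * (x1 + x2) / (y1 + y2) + (x2 - y2 * (x1 + x2) / (y1 + y2)) = 0 := by
        field_simp
        ring
      nlinarith

lemma sq_deriv {x : ℝ} : HasDerivAt (fun y : ℝ => 2 * y ^ 2) (4 * x) x := by
  have := (hasDerivAt_pow 2 x).const_mul (2:ℝ)
  refine this.congr_deriv ?_
  norm_num; ring

lemma pinsker {a t : ℝ} (ha : 0 < a) (ht : 0 < t) (hat : a + t ≤ 1) :
    2 * a ^ 2 ≤ realF a t := by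
  unfold realF
  have ht1 : t < 1 := by linarith
  have h1t : 0 < 1 - t := by linarith
  rcases eq_or_lt_of_le hat with hq | hq
  · -- endpoint a + t = 1
    have h0 : 1 - a - t = 0 := by linarith
    rw [h0, zero_mul, add_zero, hq, one_mul,
      Real.log_div one_ne_zero (ne_of_gt ht), Real.log_one, zero_sub]
    have key := mono_aux (f := fun x : ℝ => -Real.log (1 - x) - 2 * x ^ 2)
      (f' := fun x => (1 - x)⁻¹ - 4 * x) ha.le
      (fun x hx => by
        have hx1 : 0 < 1 - x := by rcases hx with ⟨_, h⟩; linarith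
        have hb : HasDerivAt (fun y : ℝ => 1 - y) (-1) x := by
          simpa using (hasDerivAt_id x).const_sub 1
        have hl : HasDerivAt (fun y : ℝ => Real.log (1 - y)) (-1 / (1 - x)) x :=
          hb.log (ne_of_gt hx1)
        have h := (hl.neg).sub sq_deriv
        refine h.congr_deriv ?_
        ring)
      (fun x hx => by
        have hx1 : 0 < 1 - x := by rcases hx with ⟨_, h⟩; linarith
        have : 4 * x ≤ (1 - x)⁻¹ := by
          rw [inv_eq_one_div, le_div_iff₀ hx1]
          nlinarith [sq_nonneg (1 - 2 * x)]
        simp only [sub_nonneg]; linarith)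
    simp only [sub_zero, Real.log_one, neg_zero, zero_sub, neg_neg] at key
    norm_num at key
    rw [show (1:ℝ) - a = t by linarith] at key
    linarith
  · -- interior case: a + t < 1
    have h1at : 0 < 1 - a - t := by linarith
    set g : ℝ → ℝ := fun s => (s + t) * Real.log (s + t) + (1 - s - t) * Real.log (1 - s - t)
      - ((s + t) * Real.log t + (1 - s - t) * Real.log (1 - t) + 2 * s ^ 2) with hg
    set A : ℝ → ℝ := fun s => Real.log (s + t) - Real.log (1 - s - t)
      - (Real.log t - Real.log (1 - t) + 4 * s) with hA
    -- A is nonneg on [0, a]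
    have hApos : ∀ s ∈ Icc (0:ℝ) a, 0 ≤ A s := by
      intro s hs
      have hs0 : 0 ≤ s := hs.1
      have hsa : s ≤ a := hs.2
      have hkey := mono_aux (f := A)
        (f' := fun x => (x + t)⁻¹ + (1 - x - t)⁻¹ - 4) hs.1
        (fun x hx => by
          have hxt : 0 < x + t := by rcases hx with ⟨h, _⟩; linarith
          have hx1 : 0 < 1 - x - t := by rcases hx with ⟨_, h⟩; linarith
          have hb1 : HasDerivAt (fun y : ℝ => y + t) (1:ℝ) x := by
            simpa using (hasDerivAt_id x).add_const t
          have hb2 : HasDerivAt (fun y : ℝ => 1 - y - t) (-1 : ℝ) x := by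
            have := ((hasDerivAt_id x).const_sub 1).sub_const t
            simpa using this
          have hl1 : HasDerivAt (fun y : ℝ => Real.log (y + t)) (1 / (x + t)) x :=
            hb1.log (ne_of_gt hxt)
          have hl2 : HasDerivAt (fun y : ℝ => Real.log (1 - y - t)) (-1 / (1 - x - t)) x :=
            hb2.log (ne_of_gt hx1)
          have hlin : HasDerivAt (fun y : ℝ => Real.log t - Real.log (1 - t) + 4 * y)
              (4 : ℝ) x := by
            simpa using ((hasDerivAt_id x).const_mul (4:ℝ)).const_add
              (Real.log t - Real.log (1 - t))
          have h := (hl1.sub hl2).sub hlin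
          refine h.congr_deriv ?_
          ring)
        (fun x hx => by
          have hxt : 0 < x + t := by rcases hx with ⟨h, _⟩; linarith
          have hx1 : 0 < 1 - x - t := by rcases hx with ⟨_, h⟩; linarith
          have h4 : 4 * ((x + t) * (1 - x - t)) ≤ 1 := by nlinarith [sq_nonneg (1 - 2*(x+t))]
          have e1 : (x + t)⁻¹ + (1 - x - t)⁻¹ = ((x+t)*(1-x-t))⁻¹ * ((x+t)+(1-x-t)) := by
            field_simp
            ring
          have e2 : (4:ℝ) ≤ (x + t)⁻¹ + (1 - x - t)⁻¹ := by
            rw [e1, show (x+t)+(1-x-t) = 1 by ring, mul_one, inv_eq_one_div,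
              le_div_iff₀ (by positivity)]
            linarith
          simp only [sub_nonneg]; exact e2)
      have hA0 : A 0 = 0 := by simp [hA]
      rw [hA0] at hkey
      exact hkey
    -- now g 0 ≤ g a
    have hkey := mono_aux (f := g) (f' := A) ha.le
      (fun x hx => by
        have hxt : 0 < x + t := by rcases hx with ⟨h, _⟩; linarith
        have hx1 : 0 < 1 - x - t := by rcases hx with ⟨_, h⟩; linarith
        have hb1 : HasDerivAt (fun y : ℝ => y + t) (1:ℝ) x := by
          simpa using (hasDerivAt_id x).add_const t
        have hb2 : HasDerivAt (fun y : ℝ => 1 - y - t) (-1 : ℝ) x := by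
          have := ((hasDerivAt_id x).const_sub 1).sub_const t
          simpa using this
        have hm1 : HasDerivAt (fun y : ℝ => (y + t) * Real.log (y + t))
            ((Real.log (x + t) + 1) * 1) x := by
          exact (Real.hasDerivAt_mul_log (ne_of_gt hxt)).comp x hb1
        have hm2 : HasDerivAt (fun y : ℝ => (1 - y - t) * Real.log (1 - y - t))
            ((Real.log (1 - x - t) + 1) * (-1)) x := by
          exact (Real.hasDerivAt_mul_log (ne_of_gt hx1)).comp x hb2
        have hm3 : HasDerivAt (fun y : ℝ => (y + t) * Real.log t) (Real.log t) x := by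
          simpa using hb1.mul_const (Real.log t)
        have hm4 : HasDerivAt (fun y : ℝ => (1 - y - t) * Real.log (1 - t))
            (-Real.log (1 - t)) x := by
          simpa using hb2.mul_const (Real.log (1 - t))
        have h := (hm1.add hm2).sub ((hm3.add hm4).add sq_deriv)
        refine h.congr_deriv ?_
        simp [hA]
        ring)
      (fun x hx => hApos x hx)
    have hg0 : g 0 = 0 := by simp [hg]
    rw [hg0] at hkey
    simp only [hg] at hkey
    rw [Real.log_div (by positivity) (ne_of_gt ht), Real.log_div (ne_of_gt h1at) (ne_of_gt h1t)]
    nlinarith [hkey]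

lemma f0_lb {a : ℝ} (ha : a ∈ Ioo (0:ℝ) 1) : ((2 * a ^ 2 : ℝ) : EReal) ≤ f0KS a := by
  refine le_iInf₂ fun t ht => ?_
  by_cases h : t ≤ 1 - a
  · rw [fKS_of_le h, EReal.coe_le_coe_iff]
    exact pinsker ha.1 ht.1 (by linarith)
  · rw [fKS_of_gt h]; exact le_top

lemma f0_ub {a : ℝ} (ha : a ∈ Ioo (0:ℝ) 1) :
    f0KS a ≤ ((a * Real.log ((1 + a) / (1 - a)) : ℝ) : EReal) := by
  obtain ⟨ha0, ha1⟩ := ha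
  have hm : (1 - a) / 2 ∈ Ioo (0:ℝ) 1 := ⟨by linarith, by linarith⟩
  have hle : f0KS a ≤ fKS a ((1 - a) / 2) := by
    exact iInf₂_le _ hm
  have heq : realF a ((1 - a) / 2) = a * Real.log ((1 + a) / (1 - a)) := by
    have h1 : (1:ℝ) + a ≠ 0 := by linarith
    have h2 : (1:ℝ) - a ≠ 0 := by linarith
    unfold realF
    rw [show a + (1 - a) / 2 = (1 + a) / 2 by ring,
        show 1 - a - (1 - a) / 2 = (1 - a) / 2 by ring,
        show 1 - (1 - a) / 2 = (1 + a) / 2 by ring,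
        show ((1 + a) / 2) / ((1 - a) / 2) = (1 + a) / (1 - a) by
          rw [div_div_div_comm]; norm_num,
        show ((1 - a) / 2) / ((1 + a) / 2) = (1 - a) / (1 + a) by
          rw [div_div_div_comm]; norm_num,
        Real.log_div h1 h2, Real.log_div h2 h1]
    ring
  rw [fKS_of_le (by linarith), heq] at hle
  exact hle

lemma f0_eq {a : ℝ} (ha : a ∈ Ioo (0:ℝ) 1) : f0KS a = (((f0KS a).toReal : ℝ) : EReal) := by
  have h1 := f0_lb ha
  have h2 := f0_ub ha
  exact (EReal.coe_toReal (ne_top_of_le_ne_top (EReal.coe_ne_top _) h2)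
    (ne_bot_of_le_ne_bot (EReal.coe_ne_bot _) h1)).symm

lemma g_lb {a : ℝ} (ha : a ∈ Ioo (0:ℝ) 1) : 2 * a ^ 2 ≤ (f0KS a).toReal := by
  have := f0_lb ha
  rw [f0_eq ha, EReal.coe_le_coe_iff] at this
  exact this

lemma g_ub {a : ℝ} (ha : a ∈ Ioo (0:ℝ) 1) :
    (f0KS a).toReal ≤ a * Real.log ((1 + a) / (1 - a)) := by
  have := f0_ub ha
  rw [f0_eq ha, EReal.coe_le_coe_iff] at this
  exact this

lemma exists_near {a : ℝ} (ha : a ∈ Ioo (0:ℝ) 1) {ε : ℝ} (hε : 0 < ε) :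
    ∃ t ∈ Ioo (0:ℝ) 1, t ≤ 1 - a ∧ realF a t < (f0KS a).toReal + ε := by
  have hlt : f0KS a < (((f0KS a).toReal + ε : ℝ) : EReal) := by
    conv_lhs => rw [f0_eq ha]
    rw [EReal.coe_lt_coe_iff]
    linarith
  rw [f0KS] at hlt
  obtain ⟨t, ht⟩ := iInf_lt_iff.mp hlt
  obtain ⟨htmem, hlt'⟩ := iInf_lt_iff.mp ht
  have hle : t ≤ 1 - a := by
    by_contra hgt
    rw [fKS_of_gt hgt] at hlt'
    exact not_top_lt hlt'
  rw [fKS_of_le hle, EReal.coe_lt_coe_iff] at hlt'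
  exact ⟨t, htmem, hle, hlt'⟩

lemma g_convex : ConvexOn ℝ (Ioo (0:ℝ) 1) (fun a => (f0KS a).toReal) := by
  refine ⟨convex_Ioo 0 1, ?_⟩
  intro a₁ h1 a₂ h2 p q hp hq hpq
  simp only [smul_eq_mul]
  have hc : p * a₁ + q * a₂ ∈ Ioo (0:ℝ) 1 := by
    have := (convex_Ioo (0:ℝ) 1) h1 h2 hp hq hpq
    simpa using this
  rcases eq_or_lt_of_le hp with hp0 | hp0
  · have hq1 : q = 1 := by linarith
    simp [← hp0, hq1]
  rcases eq_or_lt_of_le hq with hq0 | hq0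
  · have hp1 : p = 1 := by linarith
    simp [← hq0, hp1]
  apply le_of_forall_pos_le_add
  intro ε hε
  obtain ⟨t₁, ht₁, hle₁, hF₁⟩ := exists_near h1 hε
  obtain ⟨t₂, ht₂, hle₂, hF₂⟩ := exists_near h2 hε
  have ht0 : 0 < p * t₁ + q * t₂ := by
    have := mul_pos hp0 ht₁.1
    have := mul_pos hq0 ht₂.1
    linarith
  have htle : p * t₁ + q * t₂ ≤ 1 - (p * a₁ + q * a₂) := by
    have e1 : p * t₁ ≤ p * (1 - a₁) := mul_le_mul_of_nonneg_left hle₁ hp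
    have e2 : q * t₂ ≤ q * (1 - a₂) := mul_le_mul_of_nonneg_left hle₂ hq
    nlinarith
  have htIoo : p * t₁ + q * t₂ ∈ Ioo (0:ℝ) 1 := ⟨ht0, by nlinarith [hc.1]⟩
  have hstep1 : (f0KS (p * a₁ + q * a₂)).toReal ≤ realF (p * a₁ + q * a₂) (p * t₁ + q * t₂) := by
    have h : f0KS (p * a₁ + q * a₂) ≤ fKS (p * a₁ + q * a₂) (p * t₁ + q * t₂) := by
      rw [f0KS]
      exact iInf₂_le _ htIoo
    rw [f0_eq hc, fKS_of_le htle, EReal.coe_le_coe_iff] at h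
    exact h
  have key : realF (p * a₁ + q * a₂) (p * t₁ + q * t₂) ≤
      p * realF a₁ t₁ + q * realF a₂ t₂ := by
    have hx1 : (0:ℝ) ≤ p * (a₁ + t₁) := mul_nonneg hp (by linarith [h1.1, ht₁.1])
    have hx2 : (0:ℝ) ≤ q * (a₂ + t₂) := mul_nonneg hq (by linarith [h2.1, ht₂.1])
    have hy1 : (0:ℝ) < p * t₁ := mul_pos hp0 ht₁.1
    have hy2 : (0:ℝ) < q * t₂ := mul_pos hq0 ht₂.1
    have hu1 : (0:ℝ) ≤ p * (1 - a₁ - t₁) := by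
      have : (0:ℝ) ≤ 1 - a₁ - t₁ := by linarith
      positivity
    have hu2 : (0:ℝ) ≤ q * (1 - a₂ - t₂) := by
      have : (0:ℝ) ≤ 1 - a₂ - t₂ := by linarith
      positivity
    have hv1 : (0:ℝ) < p * (1 - t₁) := mul_pos hp0 (by linarith [ht₁.2])
    have hv2 : (0:ℝ) < q * (1 - t₂) := mul_pos hq0 (by linarith [ht₂.2])
    have L1 := log_sum hx1 hx2 hy1 hy2
    rw [mul_div_mul_left _ _ (ne_of_gt hp0), mul_div_mul_left _ _ (ne_of_gt hq0)] at L1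
    have L2 := log_sum hu1 hu2 hv1 hv2
    rw [mul_div_mul_left _ _ (ne_of_gt hp0), mul_div_mul_left _ _ (ne_of_gt hq0)] at L2
    unfold realF
    have e1 : p * a₁ + q * a₂ + (p * t₁ + q * t₂) = p * (a₁ + t₁) + q * (a₂ + t₂) := by ring
    have e2 : 1 - (p * a₁ + q * a₂) - (p * t₁ + q * t₂)
        = p * (1 - a₁ - t₁) + q * (1 - a₂ - t₂) := by linear_combination -hpq
    have e3 : 1 - (p * t₁ + q * t₂) = p * (1 - t₁) + q * (1 - t₂) := by linear_combination -hpq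
    rw [e1, e2, e3]
    linarith [L1, L2]
  have hlast : p * realF a₁ t₁ + q * realF a₂ t₂ ≤
      p * (f0KS a₁).toReal + q * (f0KS a₂).toReal + ε := by
    have e1 : p * realF a₁ t₁ ≤ p * ((f0KS a₁).toReal + ε) :=
      mul_le_mul_of_nonneg_left hF₁.le hp
    have e2 : q * realF a₂ t₂ ≤ q * ((f0KS a₂).toReal + ε) :=
      mul_le_mul_of_nonneg_left hF₂.le hq
    have : p * ε + q * ε = ε := by linear_combination ε * hpq
    nlinarith [e1, e2]
  linarith

/-- The function `f₀` is continuous on `(0,1)`, and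
`f₀(a) = 2a²(1+o(1))` as `a → 0+`, i.e. `lim_{a→0+} f₀(a)/a² = 2`. -/
theorem statement_1 :
    ContinuousOn f0KS (Set.Ioo (0 : ℝ) 1) ∧
    Tendsto (fun a : ℝ => f0KS a / ((a ^ 2 : ℝ) : EReal)) (𝓝[>] 0)
      (𝓝 ((2 : ℝ) : EReal)) := by
  constructor
  · have hg : ContinuousOn (fun a => (f0KS a).toReal) (Ioo (0:ℝ) 1) :=
      g_convex.continuousOn isOpen_Ioo
    have hc : ContinuousOn (fun a => (((f0KS a).toReal : ℝ) : EReal)) (Ioo (0:ℝ) 1) :=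
      continuous_coe_real_ereal.comp_continuousOn hg
    exact hc.congr fun a ha => f0_eq ha
  · -- limit part
    have hmem : Ioo (0:ℝ) 1 ∈ 𝓝[>] (0:ℝ) := Ioo_mem_nhdsGT_of_mem ⟨le_refl _, one_pos⟩
    -- real-valued tendsto
    have hL : Tendsto (fun a : ℝ => Real.log ((1 + a) / (1 - a)) / a) (𝓝[>] (0:ℝ)) (𝓝 2) := by
      have hd : HasDerivAt (fun x : ℝ => Real.log (1 + x) - Real.log (1 - x)) 2 0 := by
        have h1 : HasDerivAt (fun x : ℝ => Real.log (1 + x)) 1 0 := by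
          have hb : HasDerivAt (fun x : ℝ => 1 + x) (1:ℝ) 0 := by
            simpa using (hasDerivAt_id (0:ℝ)).const_add 1
          have := hb.log (by norm_num)
          simpa using this
        have h2 : HasDerivAt (fun x : ℝ => Real.log (1 - x)) (-1) 0 := by
          have hb : HasDerivAt (fun x : ℝ => 1 - x) (-1:ℝ) 0 := by
            simpa using (hasDerivAt_id (0:ℝ)).const_sub 1
          have := hb.log (by norm_num)
          norm_num at this
          exact this
        have := h1.sub h2
        norm_num at this
        exact this
      have hslope := hasDerivAt_iff_tendsto_slope.mp hd
      have hmono : 𝓝[>] (0:ℝ) ≤ 𝓝[≠] (0:ℝ) :=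
        nhdsWithin_mono _ fun x hx => ne_of_gt hx
      have h2 : Tendsto (fun a : ℝ => (Real.log (1 + a) - Real.log (1 - a)) / a)
          (𝓝[>] (0:ℝ)) (𝓝 2) := by
        have := hslope.mono_left hmono
        refine this.congr' ?_
        filter_upwards [self_mem_nhdsWithin] with a ha
        simp [slope_def_field]
      refine h2.congr' ?_
      filter_upwards [hmem] with a ha
      rw [Real.log_div (by linarith [ha.1] : (1:ℝ) + a ≠ 0) (by linarith [ha.2] : (1:ℝ) - a ≠ 0)]
    have hreal : Tendsto (fun a : ℝ => (f0KS a).toReal / a ^ 2) (𝓝[>] (0:ℝ)) (𝓝 2) := by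
      apply tendsto_of_tendsto_of_tendsto_of_le_of_le' tendsto_const_nhds hL
      · filter_upwards [hmem] with a ha
        have h2 : (0:ℝ) < a ^ 2 := pow_pos ha.1 2
        rw [le_div_iff₀ h2]
        have := g_lb ha
        linarith
      · filter_upwards [hmem] with a ha
        have h2 : (0:ℝ) < a ^ 2 := pow_pos ha.1 2
        rw [div_le_div_iff₀ h2 (by exact ha.1)]
        have := g_ub ha
        nlinarith [ha.1]
    have := (EReal.tendsto_coe (a := (2:ℝ))).mpr hreal
    refine this.congr' ?_
    filter_upwards [hmem] with a ha
    rw [f0_eq ha, ← EReal.coe_div]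
    norm_num
end
end

section
/- Let T be a nonempty set, m ≥ 1 an integer, and σ² : T → (0,∞) a function with φ₀² = sup_{t∈T} σ²(t) < ∞ and σ²(t) > φ₀²/2 for all t ∈ T. Suppose that for each t ∈ T we are given a power series g(a,t) = Σ_{j=2}^∞ c_j(t) a^j with c₂(t) = 1/(2m²σ²(t)), and that there exist constants C_j ≥ sup_{t∈T} |c_j(t)| such that Σ_{j=2}^∞ C_j a^j < ∞ for all sufficiently small a > 0. Then the function g_T(a) = inf_{t∈T} g(a,t) is continuous on (0, a₁) for some a₁ > 0, and g_T(a) = a²/(2m²φ₀²) + O(a³) as a → 0+, i.e., |g_T(a) − a²/(2m²φ₀²)| ≤ C·a³ for some constant C and all sufficiently small a > 0. -/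
open Filter Set Topology

private lemma abs_pow_sub_pow_le' {x y r : ℝ} (hx : |x| ≤ r) (hy : |y| ≤ r) (n : ℕ) :
    |x ^ n - y ^ n| ≤ n * r ^ (n - 1) * |x - y| := by
  have hr : 0 ≤ r := le_trans (abs_nonneg x) hx
  rw [← geom_sum₂_mul x y n, abs_mul]
  have hsum : |∑ i ∈ Finset.range n, x ^ i * y ^ (n - 1 - i)| ≤ n * r ^ (n - 1) := by
    calc |∑ i ∈ Finset.range n, x ^ i * y ^ (n - 1 - i)|
        ≤ ∑ i ∈ Finset.range n, |x ^ i * y ^ (n - 1 - i)| := Finset.abs_sum_le_sum_abs _ _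
      _ ≤ ∑ _i ∈ Finset.range n, r ^ (n - 1) := by
          apply Finset.sum_le_sum
          intro i hi
          rw [abs_mul, abs_pow, abs_pow]
          have hin : i + (n - 1 - i) = n - 1 := by
            have := Finset.mem_range.mp hi; omega
          calc |x| ^ i * |y| ^ (n - 1 - i) ≤ r ^ i * r ^ (n - 1 - i) := by
                gcongr <;> positivity
            _ = r ^ (n - 1) := by rw [← pow_add, hin]
      _ = n * r ^ (n - 1) := by
          rw [Finset.sum_const, Finset.card_range, nsmul_eq_mul]
  exact mul_le_mul_of_nonneg_right hsum (abs_nonneg _) |>.trans_eq rfl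

private lemma abs_ciInf_sub_ciInf {T : Type*} [Nonempty T] {f h : T → ℝ}
    (hf : BddBelow (Set.range f)) (hh : BddBelow (Set.range h)) {L : ℝ}
    (hb : ∀ t, |f t - h t| ≤ L) : |(⨅ t, f t) - ⨅ t, h t| ≤ L := by
  have key : ∀ (u v : T → ℝ), BddBelow (Set.range u) → (∀ t, |u t - v t| ≤ L) →
      (⨅ t, u t) - (⨅ t, v t) ≤ L := by
    intro u v hu hb'
    have h1 : (⨅ t, u t) - L ≤ ⨅ t, v t := by
      refine le_ciInf fun t => ?_
      have h2 := ciInf_le hu t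
      have h3 := abs_le.1 (hb' t)
      linarith [h3.1, h3.2]
    linarith
  exact abs_sub_le_iff.2 ⟨key f h hf hb,
    key h f hh (fun t => by rw [abs_sub_comm]; exact hb t)⟩

set_option maxHeartbeats 1000000 in
/-- The analytic part of Theorem 2.1: if the rate functions
`g(a,t) = Σ_{j≥2} c_j(t) aʲ` of a family indexed by `t ∈ T` have leading
coefficient `c₂(t) = 1/(2m²σ²(t))`, with `σ²(t) > φ₀²/2` where
`φ₀² = sup_t σ²(t) < ∞`, and the coefficients admit a convergent majorant
series, then `g_T(a) = inf_t g(a,t)` is continuous near `0` and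
`g_T(a) = a²/(2m²φ₀²) + O(a³)` as `a → 0+`. -/
theorem statement_4 {T : Type*} [Nonempty T] (m : ℕ) (hm : 1 ≤ m)
    (sq : T → ℝ) (hsq_pos : ∀ t, 0 < sq t)
    (hbdd : BddAbove (Set.range sq))
    (φ0sq : ℝ) (hφ0 : φ0sq = ⨆ t, sq t)
    (hhalf : ∀ t, φ0sq / 2 < sq t)
    (c : ℕ → T → ℝ) (hc2 : ∀ t, c 2 t = 1 / (2 * (m : ℝ) ^ 2 * sq t))
    (C : ℕ → ℝ) (hC : ∀ (j : ℕ) (t : T), |c j t| ≤ C j)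
    (hCsum : ∃ a₂ > (0 : ℝ), ∀ a : ℝ, 0 < a → a < a₂ →
      Summable fun j : ℕ => C (j + 2) * a ^ (j + 2))
    (g : ℝ → T → ℝ) (hg : ∀ a t, g a t = ∑' j : ℕ, c (j + 2) t * a ^ (j + 2))
    (gT : ℝ → ℝ) (hgT : ∀ a, gT a = ⨅ t, g a t) :
    (∃ a₁ > (0 : ℝ), ContinuousOn gT (Set.Ioo 0 a₁)) ∧
    ∃ C' : ℝ, ∃ δ > (0 : ℝ), ∀ a : ℝ, 0 < a → a < δ →
      |gT a - a ^ 2 / (2 * (m : ℝ) ^ 2 * φ0sq)| ≤ C' * a ^ 3 := by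
  obtain ⟨a₂, ha₂, hsum⟩ := hCsum
  set b := a₂ / 2 with hbdef
  have hb0 : 0 < b := by positivity
  have hbb : b < a₂ := by rw [hbdef]; linarith
  set a₁ := a₂ / 4 with ha₁def
  have ha₁0 : 0 < a₁ := by positivity
  have ha₁b : a₁ < b := by rw [ha₁def, hbdef]; linarith
  have hm0 : (0:ℝ) < (m:ℝ) := by exact_mod_cast Nat.lt_of_lt_of_le Nat.zero_lt_one hm
  have hc2pos : ∀ t, 0 < c 2 t := fun t => by
    rw [hc2]
    have := hsq_pos t
    positivity
  have hCnn : ∀ j, 0 ≤ C j := fun j =>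
    le_trans (abs_nonneg _) (hC j (Classical.arbitrary T))
  -- summability of the base series at b
  have hSb : Summable fun j : ℕ => C (j + 2) * b ^ (j + 2) := hsum b hb0 hbb
  have hSb3 : Summable fun j : ℕ => C (j + 3) * b ^ (j + 3) := by
    have h := (summable_nat_add_iff 1).2 hSb
    exact h
  set M : ℝ := ∑' j : ℕ, C (j + 3) * b ^ j with hMdef
  have SM : Summable fun j : ℕ => C (j + 3) * b ^ j := by
    refine (hSb3.mul_right (b ^ 3)⁻¹).congr fun j => ?_
    rw [pow_add]
    field_simp
  -- summability of g-series
  have hgsum : ∀ a : ℝ, 0 < a → a < a₂ → ∀ t,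
      Summable fun j : ℕ => c (j + 2) t * a ^ (j + 2) := by
    intro a ha haa t
    refine Summable.of_abs (Summable.of_nonneg_of_le (fun j => abs_nonneg _)
      (fun j => ?_) (hsum a ha haa))
    rw [abs_mul, abs_pow, abs_of_pos ha]
    exact mul_le_mul_of_nonneg_right (hC _ t) (by positivity)
  -- key tail estimate
  have key : ∀ a : ℝ, 0 < a → a ≤ b → ∀ t, |g a t - c 2 t * a ^ 2| ≤ M * a ^ 3 := by
    intro a ha hab t
    have hf : Summable fun j : ℕ => c (j + 2) t * a ^ (j + 2) :=
      hgsum a ha (lt_of_le_of_lt hab hbb) t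
    have hsplit : g a t = c 2 t * a ^ 2 + ∑' j : ℕ, c (j + 3) t * a ^ (j + 3) := by
      rw [hg, Summable.tsum_eq_zero_add hf]
    rw [hsplit, add_sub_cancel_left]
    have hle : ∀ j : ℕ, |c (j + 3) t * a ^ (j + 3)| ≤ C (j + 3) * b ^ j * a ^ 3 := by
      intro j
      rw [abs_mul, abs_pow, abs_of_pos ha]
      calc |c (j + 3) t| * a ^ (j + 3) ≤ C (j + 3) * a ^ (j + 3) := by
            exact mul_le_mul_of_nonneg_right (hC _ t) (by positivity)
        _ = C (j + 3) * a ^ j * a ^ 3 := by ring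
        _ ≤ C (j + 3) * b ^ j * a ^ 3 :=
            mul_le_mul_of_nonneg_right
              (mul_le_mul_of_nonneg_left (pow_le_pow_left₀ ha.le hab j) (hCnn _))
              (by positivity)
    have SMa : Summable fun j : ℕ => C (j + 3) * b ^ j * a ^ 3 := SM.mul_right _
    have h1 : Summable fun j : ℕ => |c (j + 3) t * a ^ (j + 3)| :=
      Summable.of_nonneg_of_le (fun _ => abs_nonneg _) hle SMa
    calc |∑' j : ℕ, c (j + 3) t * a ^ (j + 3)|
        ≤ ∑' j : ℕ, |c (j + 3) t * a ^ (j + 3)| := by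
          have h1' : Summable fun j : ℕ => ‖c (j + 3) t * a ^ (j + 3)‖ := by
            simpa only [Real.norm_eq_abs] using h1
          simpa only [Real.norm_eq_abs] using norm_tsum_le_tsum_norm h1'
      _ ≤ ∑' j : ℕ, C (j + 3) * b ^ j * a ^ 3 := Summable.tsum_le_tsum hle h1 SMa
      _ = M * a ^ 3 := by rw [tsum_mul_right]
  -- bddBelow facts
  have hBc2 : ∀ a : ℝ, BddBelow (Set.range fun t => c 2 t * a ^ 2) := by
    intro a
    refine ⟨0, ?_⟩
    rintro z ⟨t, rfl⟩
    exact mul_nonneg (hc2pos t).le (by positivity)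
  have hBg : ∀ a : ℝ, 0 < a → a ≤ b → BddBelow (Set.range fun t => g a t) := by
    intro a ha hab
    refine ⟨-(M * a ^ 3), ?_⟩
    rintro z ⟨t, rfl⟩
    have h1 := abs_le.1 (key a ha hab t)
    have h2 : 0 ≤ c 2 t * a ^ 2 := mul_nonneg (hc2pos t).le (by positivity)
    simp only
    linarith [h1.1]
  -- the infimum identity
  have hφpos : 0 < φ0sq := by
    obtain ⟨t⟩ := ‹Nonempty T›
    have h1 : sq t ≤ ⨆ t, sq t := le_ciSup hbdd t
    rw [hφ0]; linarith [hsq_pos t]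
  have hinf : ∀ a : ℝ, 0 < a →
      (⨅ t, c 2 t * a ^ 2) = a ^ 2 / (2 * (m : ℝ) ^ 2 * φ0sq) := by
    intro a ha
    set k : ℝ := a ^ 2 / (2 * (m : ℝ) ^ 2) with hkdef
    have hk0 : 0 < k := by positivity
    have heq : ∀ t, c 2 t * a ^ 2 = k / sq t := fun t => by
      rw [hc2, hkdef]
      have := (hsq_pos t).ne'
      field_simp
    have heqR : a ^ 2 / (2 * (m : ℝ) ^ 2 * φ0sq) = k / φ0sq := by
      rw [hkdef]; field_simp
    have hle : ∀ t, sq t ≤ φ0sq := fun t => hφ0 ▸ le_ciSup hbdd t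
    rw [heqR]
    apply le_antisymm
    · by_contra hcon
      push_neg at hcon
      set i : ℝ := ⨅ t, c 2 t * a ^ 2 with hidef
      have hi0 : 0 < i := lt_trans (by positivity) hcon
      have h1 : ∀ t, sq t ≤ k / i := by
        intro t
        have h2 : i ≤ c 2 t * a ^ 2 := ciInf_le (hBc2 a) t
        rw [heq, le_div_iff₀ (hsq_pos t)] at h2
        rw [le_div_iff₀ hi0]
        nlinarith
      have h2 : φ0sq ≤ k / i := hφ0 ▸ ciSup_le h1
      have h3 : k / i < φ0sq := by
        rw [div_lt_iff₀ hi0]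
        rw [div_lt_iff₀ hφpos] at hcon
        nlinarith
      linarith
    · refine le_ciInf fun t => ?_
      rw [heq]
      gcongr
      · exact hsq_pos t
      · exact hle t
  -- the O(a³) estimate for gT
  have hmain : ∀ a : ℝ, 0 < a → a < a₁ →
      |gT a - a ^ 2 / (2 * (m : ℝ) ^ 2 * φ0sq)| ≤ M * a ^ 3 := by
    intro a ha haδ
    have hab : a ≤ b := le_of_lt (lt_trans haδ ha₁b)
    rw [hgT, ← hinf a ha]
    exact abs_ciInf_sub_ciInf (hBg a ha hab) (hBc2 a) (fun t => key a ha hab t)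
  -- Lipschitz constant
  set L : ℝ := ∑' j : ℕ, C (j + 2) * ((j : ℝ) + 2) * a₁ ^ (j + 1) with hLdef
  have SL : Summable fun j : ℕ => C (j + 2) * ((j : ℝ) + 2) * a₁ ^ (j + 1) := by
    refine Summable.of_nonneg_of_le
      (fun j => mul_nonneg (mul_nonneg (hCnn _) (by positivity)) (by positivity))
      (fun j => ?_) (hSb.mul_right b⁻¹)
    have h2 : ((j : ℝ) + 2) * a₁ ^ (j + 1) ≤ b ^ (j + 1) := by
      have ha₁eq : a₁ = b / 2 := by rw [ha₁def, hbdef]; ring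
      have hnat : (j : ℝ) + 2 ≤ 2 ^ (j + 1) := by
        have := Nat.lt_two_pow_self (n := j + 1)
        exact_mod_cast Nat.succ_le_of_lt this
      calc ((j : ℝ) + 2) * a₁ ^ (j + 1) = ((j : ℝ) + 2) * (b / 2) ^ (j + 1) := by
            rw [ha₁eq]
        _ = (((j : ℝ) + 2) / 2 ^ (j + 1)) * b ^ (j + 1) := by
            rw [div_pow]; ring
        _ ≤ 1 * b ^ (j + 1) :=
            mul_le_mul_of_nonneg_right ((div_le_one (by positivity)).2 hnat)
              (by positivity)
        _ = b ^ (j + 1) := one_mul _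
    calc C (j + 2) * ((j : ℝ) + 2) * a₁ ^ (j + 1)
        = C (j + 2) * (((j : ℝ) + 2) * a₁ ^ (j + 1)) := by ring
      _ ≤ C (j + 2) * b ^ (j + 1) := mul_le_mul_of_nonneg_left h2 (hCnn _)
      _ = C (j + 2) * b ^ (j + 2) * b⁻¹ := by
          rw [pow_succ]
          field_simp
          ring
  have hL0 : 0 ≤ L := tsum_nonneg fun j =>
    mul_nonneg (mul_nonneg (hCnn _) (by positivity)) (by positivity)
  -- uniform Lipschitz estimate for g
  have hlip : ∀ x y : ℝ, x ∈ Set.Ioo 0 a₁ → y ∈ Set.Ioo 0 a₁ → ∀ t,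
      |g x t - g y t| ≤ L * |x - y| := by
    intro x y hx hy t
    have hfx := hgsum x hx.1 (lt_trans hx.2 (lt_trans ha₁b hbb)) t
    have hfy := hgsum y hy.1 (lt_trans hy.2 (lt_trans ha₁b hbb)) t
    rw [hg, hg, ← Summable.tsum_sub hfx hfy]
    have hbound : ∀ j : ℕ, |c (j + 2) t * x ^ (j + 2) - c (j + 2) t * y ^ (j + 2)|
        ≤ C (j + 2) * ((j : ℝ) + 2) * a₁ ^ (j + 1) * |x - y| := by
      intro j
      rw [← mul_sub, abs_mul]
      have hxr : |x| ≤ a₁ := by rw [abs_of_pos hx.1]; exact hx.2.le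
      have hyr : |y| ≤ a₁ := by rw [abs_of_pos hy.1]; exact hy.2.le
      have hpow := abs_pow_sub_pow_le' hxr hyr (j + 2)
      have hco : ((j + 2 : ℕ) : ℝ) = (j : ℝ) + 2 := by push_cast; ring
      rw [hco] at hpow
      have hpow' : |x ^ (j + 2) - y ^ (j + 2)| ≤ ((j : ℝ) + 2) * a₁ ^ (j + 1) * |x - y| := by
        simpa using hpow
      calc |c (j + 2) t| * |x ^ (j + 2) - y ^ (j + 2)|
          ≤ C (j + 2) * (((j : ℝ) + 2) * a₁ ^ (j + 1) * |x - y|) := by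
            apply mul_le_mul (hC _ t) hpow' (abs_nonneg _)
            exact hCnn _
        _ = C (j + 2) * ((j : ℝ) + 2) * a₁ ^ (j + 1) * |x - y| := by ring
    have hSb' : Summable fun j : ℕ => C (j + 2) * ((j : ℝ) + 2) * a₁ ^ (j + 1) * |x - y| :=
      SL.mul_right _
    have h1 : Summable fun j : ℕ =>
        |c (j + 2) t * x ^ (j + 2) - c (j + 2) t * y ^ (j + 2)| :=
      Summable.of_nonneg_of_le (fun _ => abs_nonneg _) hbound hSb'
    calc |∑' j : ℕ, (c (j + 2) t * x ^ (j + 2) - c (j + 2) t * y ^ (j + 2))|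
        ≤ ∑' j : ℕ, |c (j + 2) t * x ^ (j + 2) - c (j + 2) t * y ^ (j + 2)| := by
          have h1' : Summable fun j : ℕ =>
              ‖c (j + 2) t * x ^ (j + 2) - c (j + 2) t * y ^ (j + 2)‖ := by
            simpa only [Real.norm_eq_abs] using h1
          simpa only [Real.norm_eq_abs] using norm_tsum_le_tsum_norm h1'
      _ ≤ ∑' j : ℕ, C (j + 2) * ((j : ℝ) + 2) * a₁ ^ (j + 1) * |x - y| :=
          Summable.tsum_le_tsum hbound h1 hSb'
      _ = L * |x - y| := by rw [tsum_mul_right]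
  constructor
  · refine ⟨a₁, ha₁0, ?_⟩
    refine LipschitzOnWith.continuousOn (K := L.toNNReal) ?_
    apply LipschitzOnWith.of_dist_le_mul
    intro x hx y hy
    rw [Real.dist_eq, Real.dist_eq, Real.coe_toNNReal _ hL0, hgT, hgT]
    have hxb : x ≤ b := le_of_lt (lt_trans hx.2 ha₁b)
    have hyb : y ≤ b := le_of_lt (lt_trans hy.2 ha₁b)
    exact abs_ciInf_sub_ciInf (hBg x hx.1 hxb) (hBg y hy.1 hyb)
      (fun t => hlip x y hx hy t)
  · exact ⟨M, a₁, ha₁0, hmain⟩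
end

section
/- Let E₁, E₂, E₃ be real Banach spaces, x₀ ∈ E₁, y₀ ∈ E₂, r, ρ > 0, and let F : E₁ × E₂ → E₃ be analytic on an open set containing the closed ball of radius r around x₀ times the closed ball of radius ρ around y₀, with F(x₀,y₀) = 0. Suppose the partial Fréchet derivative B = ∂F/∂x (x₀,y₀) : E₁ → E₃ is a continuous linear bijection with bounded inverse. Then there exist r₁ > 0 and ρ₁ > 0 and a map f from the open ball D_{ρ₁}(y₀) ⊂ E₂ to E₁ such that: f is analytic on D_{ρ₁}(y₀), f(y₀) = x₀, and for every y ∈ D_{ρ₁}(y₀), x = f(y) is the unique point in the ball D_{r₁}(x₀) ⊂ E₁ satisfying F(x,y) = 0. -/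
open Metric

/-- Implicit analytic operator theorem (Vainberg–Trenogin,
Theorem 22.2): if `F` is analytic near `closedBall x₀ r ×ˢ closedBall y₀ ρ`,
`F (x₀, y₀) = 0`, and the partial Fréchet derivative in `x` at `(x₀, y₀)` is a
continuous linear bijection with bounded inverse, then locally the equation
`F (x, y) = 0` has a unique analytic solution `x = f y` with `f y₀ = x₀`. -/
theorem statement_9 {E₁ E₂ E₃ : Type*}
    [NormedAddCommGroup E₁] [NormedSpace ℝ E₁] [CompleteSpace E₁]
    [NormedAddCommGroup E₂] [NormedSpace ℝ E₂] [CompleteSpace E₂]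
    [NormedAddCommGroup E₃] [NormedSpace ℝ E₃] [CompleteSpace E₃]
    (x₀ : E₁) (y₀ : E₂) (r ρ : ℝ) (hr : 0 < r) (hρ : 0 < ρ)
    (F : E₁ × E₂ → E₃) (U : Set (E₁ × E₂)) (hU : IsOpen U)
    (hsub : (closedBall x₀ r) ×ˢ (closedBall y₀ ρ) ⊆ U)
    (hF : AnalyticOnNhd ℝ F U) (hF0 : F (x₀, y₀) = 0)
    (B : E₁ ≃L[ℝ] E₃)
    (hB : (B : E₁ →L[ℝ] E₃) = fderiv ℝ (fun x => F (x, y₀)) x₀) :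
    ∃ r₁ > 0, ∃ ρ₁ > 0, ∃ f : E₂ → E₁,
      AnalyticOnNhd ℝ f (ball y₀ ρ₁) ∧ f y₀ = x₀ ∧
      ∀ y ∈ ball y₀ ρ₁,
        f y ∈ ball x₀ r₁ ∧ F (f y, y) = 0 ∧
        ∀ x ∈ ball x₀ r₁, F (x, y) = 0 → x = f y := by
  classical
  set p₀ : E₁ × E₂ := (x₀, y₀) with hp₀def
  have hp₀U : p₀ ∈ U :=
    hsub ⟨mem_closedBall_self hr.le, mem_closedBall_self hρ.le⟩
  -- the full map Φ (x, y) = (F (x, y), y)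
  set Φ : E₁ × E₂ → E₃ × E₂ := fun p => (F p, p.2) with hΦdef
  have hΦan : AnalyticOnNhd ℝ Φ U := fun p hp => (hF p hp).prod analyticAt_snd
  -- the total derivative of F at p₀
  set A : E₁ × E₂ →L[ℝ] E₃ := fderiv ℝ F p₀ with hAdef
  have hA : HasStrictFDerivAt F A p₀ := (hF p₀ hp₀U).hasStrictFDerivAt
  -- the partial derivative in x is A ∘ inl = B
  have hBA : (B : E₁ →L[ℝ] E₃) = A.comp (ContinuousLinearMap.inl ℝ E₁ E₂) := by
    have h1 : HasFDerivAt (fun x => F (x, y₀))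
        (A.comp (ContinuousLinearMap.inl ℝ E₁ E₂)) x₀ :=
      hA.hasFDerivAt.comp x₀ (hasFDerivAt_prodMk_left x₀ y₀)
    rw [hB, h1.fderiv]
  set C : E₂ →L[ℝ] E₃ := A.comp (ContinuousLinearMap.inr ℝ E₁ E₂) with hCdef
  have hAsplit : ∀ v : E₁ × E₂, A v = B v.1 + C v.2 := by
    intro v
    have hv : v = (v.1, 0) + (0, v.2) := by ext <;> simp
    have h1 : A (v.1, 0) = B v.1 := by
      have h : A (v.1, 0) = A.comp (ContinuousLinearMap.inl ℝ E₁ E₂) v.1 := rfl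
      rw [h, ← hBA]; rfl
    have h2 : A (0, v.2) = C v.2 := rfl
    calc A v = A ((v.1, 0) + (0, v.2)) := by rw [← hv]
      _ = A (v.1, 0) + A (0, v.2) := map_add _ _ _
      _ = B v.1 + C v.2 := by rw [h1, h2]
  -- the derivative of Φ at p₀, as a continuous linear equiv
  set i : (E₁ × E₂) ≃L[ℝ] (E₃ × E₂) :=
    ContinuousLinearEquiv.equivOfInverse
      (A.prod (ContinuousLinearMap.snd ℝ E₁ E₂))
      ((((B.symm : E₃ →L[ℝ] E₁).comp
          ((ContinuousLinearMap.fst ℝ E₃ E₂) -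
            C.comp (ContinuousLinearMap.snd ℝ E₃ E₂)))).prod
        (ContinuousLinearMap.snd ℝ E₃ E₂))
      (by
        intro v
        simp only [ContinuousLinearMap.prod_apply, ContinuousLinearMap.comp_apply,
          ContinuousLinearMap.sub_apply, ContinuousLinearMap.coe_fst',
          ContinuousLinearMap.coe_snd']
        refine Prod.ext ?_ rfl
        simp only [hAsplit v, add_sub_cancel_right]
        exact B.symm_apply_apply v.1)
      (by
        intro w
        refine Prod.ext ?_ rfl
        show A (B.symm (w.1 - C w.2), w.2) = w.1
        rw [hAsplit (B.symm (w.1 - C w.2), w.2)]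
        show B (B.symm (w.1 - C w.2)) + C w.2 = w.1
        rw [B.apply_symm_apply, sub_add_cancel]) with hidef
  have hicoe : (i : (E₁ × E₂) →L[ℝ] (E₃ × E₂)) =
      A.prod (ContinuousLinearMap.snd ℝ E₁ E₂) := rfl
  have hΦ : HasStrictFDerivAt Φ (i : (E₁ × E₂) →L[ℝ] (E₃ × E₂)) p₀ := by
    rw [hicoe]
    exact HasStrictFDerivAt.prodMk hA (ContinuousLinearMap.snd ℝ E₁ E₂).hasStrictFDerivAt
  -- local homeomorphism from the inverse function theorem
  set Φloc := HasStrictFDerivAt.toOpenPartialHomeomorph (f := Φ) (hf := hΦ) with hΦlocdef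
  have hcoe : (Φloc : E₁ × E₂ → E₃ × E₂) = Φ := HasStrictFDerivAt.toOpenPartialHomeomorph_coe (hf := hΦ)
  have hsrc : p₀ ∈ Φloc.source := HasStrictFDerivAt.mem_toOpenPartialHomeomorph_source (hf := hΦ)
  have hΦp₀ : Φ p₀ = ((0 : E₃), y₀) := by simp [hΦdef, hp₀def, hF0]; exact hF0
  have htgt : ((0 : E₃), y₀) ∈ Φloc.target := by
    rw [← hΦp₀]
    exact HasStrictFDerivAt.image_mem_toOpenPartialHomeomorph_target (hf := hΦ)
  -- the "normalized derivative" N p = i⁻¹ ∘ DΦ(p)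
  set N : E₁ × E₂ → (E₁ × E₂) →L[ℝ] (E₁ × E₂) :=
    fun p => (i.symm : (E₃ × E₂) →L[ℝ] (E₁ × E₂)).comp (fderiv ℝ Φ p) with hNdef
  have hfdan : AnalyticOnNhd ℝ (fderiv ℝ Φ) U := hΦan.fderiv_of_isOpen hU
  have hN0 : N p₀ = 1 := by
    have hfd : fderiv ℝ Φ p₀ = (i : (E₁ × E₂) →L[ℝ] (E₃ × E₂)) :=
      hΦ.hasFDerivAt.fderiv
    rw [hNdef]
    simp only [hfd]
    ext v <;> simp
  have hNcOn : ContinuousOn N U :=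
    continuousOn_const.clm_comp hfdan.continuousOn
  have hNc : ContinuousAt N p₀ :=
    (hNcOn p₀ hp₀U).continuousAt (hU.mem_nhds hp₀U)
  -- choose δ
  have hev : ∀ᶠ p in nhds p₀, p ∈ Φloc.source ∧ p ∈ U ∧ ‖1 - N p‖ < 1 := by
    have h1 : ∀ᶠ p in nhds p₀, p ∈ Φloc.source :=
      Φloc.open_source.mem_nhds hsrc
    have h2 : ∀ᶠ p in nhds p₀, p ∈ U := hU.mem_nhds hp₀U
    have h3 : ∀ᶠ p in nhds p₀, ‖1 - N p‖ < 1 := by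
      have := hNc (Metric.ball_mem_nhds (N p₀) one_pos)
      filter_upwards [this] with p hp
      rw [hN0] at hp
      have h2 : dist (N p) 1 < 1 := mem_ball.1 hp
      rwa [dist_eq_norm'] at h2
    filter_upwards [h1, h2, h3] with p u v w using ⟨u, v, w⟩
  obtain ⟨δ, hδpos, hδ⟩ := Metric.eventually_nhds_iff_ball.1 hev
  -- on the δ-ball, DΦ is invertible
  have hinv : ∀ q ∈ ball p₀ δ, ∃ e : (E₁ × E₂) ≃L[ℝ] (E₃ × E₂),
      fderiv ℝ Φ q = (e : (E₁ × E₂) →L[ℝ] (E₃ × E₂)) := by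
    intro q hq
    obtain ⟨-, -, hn⟩ := hδ q hq
    refine ⟨(ContinuousLinearEquiv.ofUnit (Units.oneSub (1 - N q) hn)).trans i, ?_⟩
    refine ContinuousLinearMap.ext fun v => ?_
    have h1 : (((ContinuousLinearEquiv.ofUnit (Units.oneSub (1 - N q) hn)).trans i :
        (E₁ × E₂) →L[ℝ] (E₃ × E₂)) v) = i (((1 : (E₁ × E₂) →L[ℝ] (E₁ × E₂)) - (1 - N q)) v) := rfl
    rw [h1, sub_sub_cancel]
    show fderiv ℝ Φ q v = i (i.symm (fderiv ℝ Φ q v))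
    rw [i.apply_symm_apply]
  -- the open set of good parameters y
  have hO : IsOpen (Φloc.target ∩ Φloc.symm ⁻¹' (ball p₀ δ)) :=
    Φloc.continuousOn_symm.isOpen_inter_preimage Φloc.open_target isOpen_ball
  set W : Set E₂ := (fun y : E₂ => ((0 : E₃), y)) ⁻¹'
      (Φloc.target ∩ Φloc.symm ⁻¹' (ball p₀ δ)) with hWdef
  have hWopen : IsOpen W :=
    hO.preimage (continuous_const.prodMk continuous_id)
  have hy₀W : y₀ ∈ W := by
    refine ⟨htgt, ?_⟩
    have : Φloc.symm ((0 : E₃), y₀) = p₀ := by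
      rw [← hΦp₀, ← hcoe]
      exact Φloc.left_inv hsrc
    show Φloc.symm ((0 : E₃), y₀) ∈ ball p₀ δ
    rw [this]
    exact mem_ball_self hδpos
  obtain ⟨ρ₁', hρ₁'pos, hρ₁'⟩ := Metric.isOpen_iff.1 hWopen y₀ hy₀W
  -- final data
  refine ⟨δ, hδpos, min ρ₁' δ, lt_min hρ₁'pos hδpos,
    fun y => (Φloc.symm ((0 : E₃), y)).1, ?_, ?_, ?_⟩
  · -- analyticity
    intro y hy
    have hyW : y ∈ W := hρ₁' (ball_subset_ball (min_le_left _ _) hy)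
    obtain ⟨hyt, hyq⟩ := hyW
    set q := Φloc.symm ((0 : E₃), y) with hqdef
    have hqball : q ∈ ball p₀ δ := hyq
    obtain ⟨-, hqU, -⟩ := hδ q hqball
    obtain ⟨e, he⟩ := hinv q hqball
    have hsymm : AnalyticAt ℝ Φloc.symm ((0 : E₃), y) := by
      refine Φloc.analyticAt_symm (i := e) hyt ?_ ?_
      · rw [hcoe]; exact hΦan q hqU
      · rw [hcoe]; exact he
    have hin : AnalyticAt ℝ (fun y : E₂ => ((0 : E₃), y)) y :=
      analyticAt_const.prod analyticAt_id
    exact analyticAt_fst.comp (hsymm.comp hin)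
  · -- f y₀ = x₀
    have h : Φloc.symm ((0 : E₃), y₀) = p₀ := by
      rw [← hΦp₀, ← hcoe]
      exact Φloc.left_inv hsrc
    show (Φloc.symm ((0 : E₃), y₀)).1 = x₀
    rw [h]
  · -- solution properties
    intro y hy
    have hyW : y ∈ W := hρ₁' (ball_subset_ball (min_le_left _ _) hy)
    obtain ⟨hyt, hyq⟩ := hyW
    set q := Φloc.symm ((0 : E₃), y) with hqdef
    have hqball : q ∈ ball p₀ δ := hyq
    obtain ⟨hqsrc, -, -⟩ := hδ q hqball
    have hΦq : Φ q = ((0 : E₃), y) := by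
      rw [← hcoe]; exact Φloc.right_inv hyt
    have hq2 : q.2 = y := congrArg Prod.snd hΦq
    have hFq : F q = 0 := congrArg Prod.fst hΦq
    have hqeq : q = (q.1, y) := by rw [← hq2]
    refine ⟨?_, ?_, ?_⟩
    · -- q.1 ∈ ball x₀ δ
      show q.1 ∈ ball x₀ δ
      rw [mem_ball] at hqball ⊢
      calc dist q.1 x₀ ≤ dist q p₀ := by
            rw [Prod.dist_eq]; exact le_max_left _ _
        _ < δ := hqball
    · show F (q.1, y) = 0
      rw [← hqeq]; exact hFq
    · intro x hx hFx
      have hxball : ((x, y) : E₁ × E₂) ∈ ball p₀ δ := by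
        rw [mem_ball, Prod.dist_eq]
        exact max_lt hx (lt_of_lt_of_le (mem_ball.1 hy) (min_le_right _ _))
      obtain ⟨hxsrc, -, -⟩ := hδ _ hxball
      have hΦx : Φ (x, y) = ((0 : E₃), y) := by simp [hΦdef, hFx]
      have : ((x, y) : E₁ × E₂) = q := by
        apply Φloc.injOn hxsrc hqsrc
        rw [hcoe, hΦx, hΦq]
      exact congrArg Prod.fst this
end

section
/- Let X be a standard exponential random variable (density e^{−s} on s ≥ 0), and for t ≥ 0 consider the kernel Ψ(x,y;t) = ½(1{x > t} + 1{y > t}) − 1{min(x,y) > t/2} on [0,∞)². Then the projection ψ(s;t) = E[Ψ(s,X;t)] equals ½ e^{−t} + ½·1{s > t} − e^{−t/2}·1{s > t/2}, the variance function equals ∫₀^∞ ψ(s;t)² e^{−s} ds = ¼ e^{−t}(1 − e^{−t}) for all t ≥ 0, and sup_{t ≥ 0} ¼ e^{−t}(1 − e^{−t}) = 1/16. -/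
open MeasureTheory Set Real

lemma exp_int' : IntegrableOn (fun x : ℝ => exp (-x)) (Ioi (0:ℝ)) := by
  simpa using exp_neg_integrableOn_Ioi (0:ℝ) one_pos

lemma ind_int' (a : ℝ) :
    IntegrableOn (fun x : ℝ => (if a < x then (1:ℝ) else 0) * exp (-x)) (Ioi (0:ℝ)) := by
  have h : (fun x : ℝ => (if a < x then (1:ℝ) else 0) * exp (-x)) =
      Set.indicator (Ioi a) (fun x : ℝ => exp (-x)) := by
    ext x
    by_cases h : a < x <;> simp [Set.indicator, h, mem_Ioi]
  rw [IntegrableOn, h]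
  exact exp_int'.indicator measurableSet_Ioi

lemma ind_integral' (a : ℝ) (ha : 0 ≤ a) :
    ∫ x in Ioi (0:ℝ), (if a < x then (1:ℝ) else 0) * exp (-x) = exp (-a) := by
  have h1 : (fun x : ℝ => (if a < x then (1:ℝ) else 0) * exp (-x)) =
      Set.indicator (Ioi a) (fun x : ℝ => exp (-x)) := by
    ext x
    by_cases h : a < x <;> simp [Set.indicator, h, mem_Ioi]
  rw [h1, integral_indicator measurableSet_Ioi,
    Measure.restrict_restrict measurableSet_Ioi]
  have h2 : Ioi a ∩ Ioi (0:ℝ) = Ioi a := by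
    rw [Set.Ioi_inter_Ioi]
    simp [max_eq_left ha]
  rw [h2, integral_exp_neg_Ioi]

/-- The kernel family of the one-sided Desu statistic for a
standard exponential observation `X`: for
`Ψ(x,y;t) = ½(1{x > t} + 1{y > t}) − 1{min(x,y) > t/2}`, the projection is
`ψ(s;t) = ½e^{−t} + ½·1{s > t} − e^{−t/2}·1{s > t/2}`, the variance function is
`∫₀^∞ ψ(s;t)² e^{−s} ds = ¼ e^{−t}(1 − e^{−t})`, and its supremum over
`t ≥ 0` is `1/16`. -/
theorem statement_15 :
    (∀ t : ℝ, 0 ≤ t →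
      (∀ s : ℝ, 0 ≤ s →
        ∫ x in Ioi (0 : ℝ),
            ((1 / 2) * ((if t < s then (1 : ℝ) else 0) +
                (if t < x then (1 : ℝ) else 0)) -
              (if t / 2 < min s x then (1 : ℝ) else 0)) * exp (-x) =
          (1 / 2) * exp (-t) + (1 / 2) * (if t < s then (1 : ℝ) else 0) -
            exp (-(t / 2)) * (if t / 2 < s then (1 : ℝ) else 0)) ∧
      ∫ s in Ioi (0 : ℝ),
          ((1 / 2) * exp (-t) + (1 / 2) * (if t < s then (1 : ℝ) else 0) -
            exp (-(t / 2)) * (if t / 2 < s then (1 : ℝ) else 0)) ^ 2 *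
            exp (-s) =
        (1 / 4) * exp (-t) * (1 - exp (-t))) ∧
    sSup ((fun t : ℝ => (1 / 4) * exp (-t) * (1 - exp (-t))) '' Ici (0 : ℝ)) =
      1 / 16 := by
  refine ⟨fun t ht => ⟨fun s hs => ?_, ?_⟩, ?_⟩
  · -- projection
    have key : ∀ x : ℝ,
        ((1 / 2) * ((if t < s then (1 : ℝ) else 0) +
            (if t < x then (1 : ℝ) else 0)) -
          (if t / 2 < min s x then (1 : ℝ) else 0)) * exp (-x) =
        (1 / 2) * (if t < s then (1 : ℝ) else 0) * exp (-x) +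
          (1 / 2) * ((if t < x then (1 : ℝ) else 0) * exp (-x)) -
          (if t / 2 < s then (1 : ℝ) else 0) *
            ((if t / 2 < x then (1 : ℝ) else 0) * exp (-x)) := by
      intro x
      have hmin : (if t / 2 < min s x then (1 : ℝ) else 0) =
          (if t / 2 < s then (1 : ℝ) else 0) *
            (if t / 2 < x then (1 : ℝ) else 0) := by
        by_cases h1 : t / 2 < s <;> by_cases h2 : t / 2 < x <;>
          simp [lt_min_iff, h1, h2]
      rw [hmin]; ring
    simp only [key]
    have h1 : IntegrableOn
        (fun x : ℝ => (1 / 2) * (if t < s then (1 : ℝ) else 0) * exp (-x))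
        (Ioi (0:ℝ)) := exp_int'.const_mul _
    have h2 : IntegrableOn
        (fun x : ℝ => (1 / 2) * ((if t < x then (1 : ℝ) else 0) * exp (-x)))
        (Ioi (0:ℝ)) := (ind_int' t).const_mul _
    have h3 : IntegrableOn
        (fun x : ℝ => (if t / 2 < s then (1 : ℝ) else 0) *
          ((if t / 2 < x then (1 : ℝ) else 0) * exp (-x))) (Ioi (0:ℝ)) :=
      (ind_int' (t / 2)).const_mul _
    have h12 : IntegrableOn
        (fun x : ℝ => (1 / 2) * (if t < s then (1 : ℝ) else 0) * exp (-x) +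
          (1 / 2) * ((if t < x then (1 : ℝ) else 0) * exp (-x))) (Ioi (0:ℝ)) :=
      h1.add h2
    rw [integral_sub h12 h3, integral_add h1 h2,
      integral_const_mul, integral_const_mul, integral_const_mul,
      integral_exp_neg_Ioi_zero, ind_integral' t ht,
      ind_integral' (t / 2) (by linarith)]
    ring
  · -- variance function
    have key2 : ∀ s : ℝ,
        ((1 / 2) * exp (-t) + (1 / 2) * (if t < s then (1 : ℝ) else 0) -
            exp (-(t / 2)) * (if t / 2 < s then (1 : ℝ) else 0)) ^ 2 *
          exp (-s) =
        ((1 / 2) * exp (-t)) ^ 2 * exp (-s) +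
          ((1 / 4 : ℝ) + (1 / 2) * exp (-t) - exp (-(t / 2))) *
            ((if t < s then (1 : ℝ) else 0) * exp (-s)) +
          (exp (-(t / 2)) ^ 2 - exp (-t) * exp (-(t / 2))) *
            ((if t / 2 < s then (1 : ℝ) else 0) * exp (-s)) := by
      intro s
      rcases lt_or_ge t s with h1 | h1
      · have h2 : t / 2 < s := by linarith
        rw [if_pos h1, if_pos h2]; ring
      · rw [if_neg (not_lt.2 h1)]
        by_cases h2 : t / 2 < s
        · rw [if_pos h2]; ring
        · rw [if_neg h2]; ring
    simp only [key2]
    have h1 : IntegrableOn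
        (fun s : ℝ => ((1 / 2) * exp (-t)) ^ 2 * exp (-s)) (Ioi (0:ℝ)) :=
      exp_int'.const_mul _
    have h2 : IntegrableOn
        (fun s : ℝ => ((1 / 4 : ℝ) + (1 / 2) * exp (-t) - exp (-(t / 2))) *
          ((if t < s then (1 : ℝ) else 0) * exp (-s))) (Ioi (0:ℝ)) :=
      (ind_int' t).const_mul _
    have h3 : IntegrableOn
        (fun s : ℝ => (exp (-(t / 2)) ^ 2 - exp (-t) * exp (-(t / 2))) *
          ((if t / 2 < s then (1 : ℝ) else 0) * exp (-s))) (Ioi (0:ℝ)) :=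
      (ind_int' (t / 2)).const_mul _
    have h12 : IntegrableOn
        (fun s : ℝ => ((1 / 2) * exp (-t)) ^ 2 * exp (-s) +
          ((1 / 4 : ℝ) + (1 / 2) * exp (-t) - exp (-(t / 2))) *
            ((if t < s then (1 : ℝ) else 0) * exp (-s))) (Ioi (0:ℝ)) :=
      h1.add h2
    rw [integral_add h12 h3, integral_add h1 h2,
      integral_const_mul, integral_const_mul, integral_const_mul,
      integral_exp_neg_Ioi_zero, ind_integral' t ht,
      ind_integral' (t / 2) (by linarith)]
    have hu : exp (-t) = exp (-(t / 2)) * exp (-(t / 2)) := by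
      rw [← exp_add]; ring_nf
    rw [hu]; ring
  · -- supremum
    apply IsGreatest.csSup_eq
    constructor
    · refine ⟨Real.log 2, Real.log_nonneg (by norm_num), ?_⟩
      show (1 / 4 : ℝ) * exp (-Real.log 2) * (1 - exp (-Real.log 2)) = 1 / 16
      rw [exp_neg, exp_log (by norm_num : (0:ℝ) < 2)]
      norm_num
    · rintro y ⟨t, -, rfl⟩
      nlinarith [sq_nonneg (exp (-t) - 1 / 2)]
end

section
/- Let X be a standard exponential random variable (density e^{−s} on s ≥ 0), and for t ≥ 0 consider the kernel Ψ(x₁,x₂;t) = 1{|x₁ − x₂| < t} − ½(1{x₁ < t} + 1{x₂ < t}) on [0,∞)². Then the projection ψ(s;t) = E[Ψ(s,X;t)] equals (e^{−s+t} − ½)·1{s ≥ t} − e^{−t}(e^{−s} − ½), the variance function equals ∫₀^∞ ψ(s;t)² e^{−s} ds = (1/12) e^{−t}(1 + e^{−t} − 2 e^{−2t}) for all t ≥ 0, and the maximum of this variance function over t ≥ 0 equals (10 + 7√7)/648 and is attained at the point t with e^{−t} = (√7 + 1)/6. -/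
open MeasureTheory Set Real

lemma tail_int {k : ℝ} (hk : 0 < k) (c : ℝ) :
    ∫ x in Ioi c, exp (-(k * x)) = exp (-(k * c)) / k := by
  have hderiv : ∀ x ∈ Ici c, HasDerivAt (fun x => -exp (-(k * x)) / k) (exp (-(k * x))) x := by
    intro x _
    have h1 : HasDerivAt (fun x : ℝ => -(k * x)) (-k) x := by
      have := ((hasDerivAt_id x).const_mul k).neg
      simp only [mul_one] at this
      exact this
    have h2 := (h1.exp).neg.div_const k
    exact h2.congr_deriv (by field_simp)
  have hint : IntegrableOn (fun x => exp (-(k * x))) (Ioi c) := by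
    simpa [neg_mul] using exp_neg_integrableOn_Ioi c hk
  have htend : Filter.Tendsto (fun x => -exp (-(k * x)) / k) Filter.atTop (nhds 0) := by
    have h0 : Filter.Tendsto (fun x : ℝ => k * x) Filter.atTop Filter.atTop :=
      Filter.tendsto_id.const_mul_atTop hk
    have h1 : Filter.Tendsto (fun x : ℝ => -(k * x)) Filter.atTop Filter.atBot :=
      Filter.tendsto_neg_atBot_iff.mpr h0
    have := (Real.tendsto_exp_atBot.comp h1).neg.div_const k
    simpa using this
  have := integral_Ioi_of_hasDerivAt_of_tendsto' hderiv hint htend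
  rw [this]; field_simp; ring

lemma intg_exp {k : ℝ} (hk : 0 < k) (c C : ℝ) :
    IntegrableOn (fun x => C * exp (-(k * x))) (Ioi c) := by
  simpa [neg_mul, IntegrableOn] using (exp_neg_integrableOn_Ioi c hk).const_mul C

lemma tri_intg (c c1 c2 c3 : ℝ) :
    IntegrableOn (fun s => c3 * exp (-(3 * s)) + c2 * exp (-(2 * s)) + c1 * exp (-(1 * s)))
      (Ioi c) := by
  have := ((intg_exp three_pos c c3).add (intg_exp two_pos c c2)).add (intg_exp one_pos c c1)
  exact this

lemma tri_int (c c1 c2 c3 : ℝ) :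
    ∫ s in Ioi c, (c3 * exp (-(3 * s)) + c2 * exp (-(2 * s)) + c1 * exp (-(1 * s))) =
      c3 * exp (-(3 * c)) / 3 + c2 * exp (-(2 * c)) / 2 + c1 * exp (-(1 * c)) := by
  have h1 : IntegrableOn (fun s => c3 * exp (-(3 * s)) + c2 * exp (-(2 * s))) (Ioi c) := by
    exact (intg_exp three_pos c c3).add (intg_exp two_pos c c2)
  rw [integral_add h1 (intg_exp one_pos c c1),
    integral_add (intg_exp three_pos c c3) (intg_exp two_pos c c2),
    integral_const_mul, integral_const_mul, integral_const_mul,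
    tail_int three_pos, tail_int two_pos, tail_int one_pos]
  ring

lemma int_Ioo_exp {a b : ℝ} (h : a ≤ b) :
    ∫ x in Ioo a b, exp (-x) = exp (-a) - exp (-b) := by
  rw [← integral_Ioc_eq_integral_Ioo, ← intervalIntegral.integral_of_le h]
  rw [intervalIntegral.integral_comp_neg (fun x => exp x), integral_exp]

lemma Ioi_inter_Ioo' (a b : ℝ) : Ioi (0:ℝ) ∩ Ioo a b = Ioo (max a 0) b := by
  ext x
  simp only [mem_inter_iff, mem_Ioi, mem_Ioo, max_lt_iff]
  tauto

lemma ind_integrable {S : Set ℝ} (hS : MeasurableSet S) (C : ℝ) :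
    IntegrableOn (fun x => S.indicator (fun x => C * exp (-x)) x) (Ioi (0:ℝ)) := by
  exact ((intg_exp one_pos 0 C).congr_fun (by intro x _; simp) measurableSet_Ioi).indicator hS

lemma proj_eq (t : ℝ) (ht : 0 ≤ t) (s : ℝ) (hs : 0 ≤ s) :
    ∫ x in Ioi (0 : ℝ),
        ((if |s - x| < t then (1 : ℝ) else 0) -
          (1 / 2) * ((if s < t then (1 : ℝ) else 0) +
            (if x < t then (1 : ℝ) else 0))) * exp (-x) =
      (exp (-s + t) - 1 / 2) * (if t ≤ s then (1 : ℝ) else 0) -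
        exp (-t) * (exp (-s) - 1 / 2) := by
  have habs : ∀ x : ℝ, (|s - x| < t) ↔ (x ∈ Ioo (s - t) (s + t)) := by
    intro x; rw [abs_sub_lt_iff, mem_Ioo]
    constructor <;> rintro ⟨h1, h2⟩ <;> constructor <;> linarith
  have hIooInt : ∫ x in Ioi (0:ℝ), (Ioo (s-t) (s+t)).indicator (fun x => (1:ℝ) * exp (-x)) x
      = exp (-(max (s-t) 0)) - exp (-(s+t)) := by
    have hm : max (s-t) 0 ≤ s + t := max_le (by linarith) (by linarith)
    rw [setIntegral_indicator measurableSet_Ioo, Ioi_inter_Ioo']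
    simp only [one_mul]
    exact int_Ioo_exp hm
  have hIioInt : ∫ x in Ioi (0:ℝ), (Iio t).indicator (fun x => (1/2:ℝ) * exp (-x)) x
      = (1/2) * (1 - exp (-t)) := by
    rw [setIntegral_indicator measurableSet_Iio, Ioi_inter_Iio,
      integral_const_mul, int_Ioo_exp ht]
    norm_num
  rcases le_or_gt t s with hts | hts
  · have key : ∀ x : ℝ,
        ((if |s - x| < t then (1 : ℝ) else 0) -
          (1 / 2) * ((if s < t then (1 : ℝ) else 0) + (if x < t then (1 : ℝ) else 0))) * exp (-x)
        = (Ioo (s-t) (s+t)).indicator (fun x => (1:ℝ) * exp (-x)) x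
          - (Iio t).indicator (fun x => (1/2:ℝ) * exp (-x)) x := by
      intro x
      simp only [habs, Set.indicator_apply, mem_Iio, not_lt.mpr hts, if_false]
      split_ifs <;> ring
    rw [integral_congr_ae (Filter.Eventually.of_forall key),
      integral_sub (ind_integrable measurableSet_Ioo 1) (ind_integrable measurableSet_Iio (1/2)),
      hIooInt, hIioInt, if_pos hts, max_eq_left (by linarith)]
    have e1 : exp (-(s - t)) = exp (-s + t) := by ring_nf
    have e2 : exp (-(s + t)) = exp (-t) * exp (-s) := by rw [← exp_add]; ring_nf
    rw [e1, e2]; ring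
  · have key : ∀ x : ℝ,
        ((if |s - x| < t then (1 : ℝ) else 0) -
          (1 / 2) * ((if s < t then (1 : ℝ) else 0) + (if x < t then (1 : ℝ) else 0))) * exp (-x)
        = ((Ioo (s-t) (s+t)).indicator (fun x => (1:ℝ) * exp (-x)) x
          - (Iio t).indicator (fun x => (1/2:ℝ) * exp (-x)) x) - (1/2) * exp (-(1*x)) := by
      intro x
      simp only [habs, Set.indicator_apply, mem_Iio, hts, if_true, one_mul]
      split_ifs <;> ring
    have hint1 : IntegrableOn (fun x => (Ioo (s-t) (s+t)).indicator (fun x => (1:ℝ) * exp (-x)) x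
        - (Iio t).indicator (fun x => (1/2:ℝ) * exp (-x)) x) (Ioi (0:ℝ)) := by
      exact (ind_integrable measurableSet_Ioo 1).sub (ind_integrable measurableSet_Iio (1/2))
    rw [integral_congr_ae (Filter.Eventually.of_forall key),
      integral_sub hint1 (intg_exp one_pos 0 (1/2)),
      integral_sub (ind_integrable measurableSet_Ioo 1) (ind_integrable measurableSet_Iio (1/2)),
      hIooInt, hIioInt, if_neg (not_le.mpr hts), max_eq_right (by linarith),
      integral_const_mul, tail_int one_pos]
    have e2 : exp (-(s + t)) = exp (-t) * exp (-s) := by rw [← exp_add]; ring_nf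
    rw [e2]; norm_num; ring

lemma var_eq (t : ℝ) (ht : 0 ≤ t) :
    ∫ s in Ioi (0 : ℝ),
        ((exp (-s + t) - 1 / 2) * (if t ≤ s then (1 : ℝ) else 0) -
          exp (-t) * (exp (-s) - 1 / 2)) ^ 2 * exp (-s) =
      (1 / 12) * exp (-t) * (1 + exp (-t) - 2 * exp (-(2 * t))) := by
  set A := exp (-t) with hA
  set B := exp t with hB
  set c3H := A^2 with hc3H
  set c2H := -(A^2) with hc2H
  set c1H := A^2/4 with hc1H
  set c3K := (B-A)^2 - A^2 with hc3K
  set c2K := (B-A)*(A-1) + A^2 with hc2K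
  set c1K := ((A-1)^2 - A^2)/4 with hc1K
  have key : ∀ s : ℝ,
      ((exp (-s + t) - 1 / 2) * (if t ≤ s then (1 : ℝ) else 0) - A * (exp (-s) - 1 / 2)) ^ 2
          * exp (-s)
        = (c3H * exp (-(3 * s)) + c2H * exp (-(2 * s)) + c1H * exp (-(1 * s)))
          + (Ici t).indicator
            (fun s => c3K * exp (-(3 * s)) + c2K * exp (-(2 * s)) + c1K * exp (-(1 * s))) s := by
    intro s
    have e0 : exp (-s + t) = B * exp (-s) := by rw [hB, ← exp_add]; ring_nf
    have e3 : exp (-(3 * s)) = exp (-s) ^ 3 := by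
      rw [← Real.exp_nat_mul]; norm_num
    have e2 : exp (-(2 * s)) = exp (-s) ^ 2 := by
      rw [← Real.exp_nat_mul]; norm_num
    have e1 : exp (-(1 * s)) = exp (-s) := by norm_num
    simp only [Set.indicator_apply, mem_Ici, e0, e3, e2, e1]
    split_ifs <;> ring
  rw [integral_congr_ae (Filter.Eventually.of_forall key),
    integral_add (tri_intg 0 c1H c2H c3H) ((tri_intg 0 c1K c2K c3K).indicator measurableSet_Ici),
    setIntegral_indicator measurableSet_Ici, tri_int]
  have hset : ∫ s in Ioi (0:ℝ) ∩ Ici t,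
      (c3K * exp (-(3 * s)) + c2K * exp (-(2 * s)) + c1K * exp (-(1 * s)))
      = c3K * exp (-(3*t))/3 + c2K * exp (-(2*t))/2 + c1K * exp (-(1*t)) := by
    rcases ht.eq_or_lt with h | h
    · rw [show Ioi (0:ℝ) ∩ Ici t = Ioi t by
        rw [← h]; exact inter_eq_left.mpr Ioi_subset_Ici_self]
      exact tri_int t c1K c2K c3K
    · rw [show Ioi (0:ℝ) ∩ Ici t = Ici t from
        inter_eq_right.mpr (fun x hx => lt_of_lt_of_le h hx),
        integral_Ici_eq_integral_Ioi]
      exact tri_int t c1K c2K c3K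
  rw [hset]
  have h3 : exp (-(3 * t)) = A^3 := by
    rw [hA, ← Real.exp_nat_mul]; norm_num
  have h2 : exp (-(2 * t)) = A^2 := by
    rw [hA, ← Real.exp_nat_mul]; norm_num
  have h1 : exp (-(1 * t)) = A := by rw [hA]; norm_num
  have hBA : B = A⁻¹ := by rw [hA, hB, Real.exp_neg, inv_inv]
  have hAne : A ≠ 0 := exp_ne_zero _
  rw [h3, h2, h1, hc3H, hc2H, hc1H, hc3K, hc2K, hc1K, hBA]
  simp only [mul_zero, neg_zero, Real.exp_zero]
  field_simp
  ring

lemma part2 (t : ℝ) (ht : 0 ≤ t) :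
    (1 / 12) * exp (-t) * (1 + exp (-t) - 2 * exp (-(2 * t))) ≤
      (10 + 7 * Real.sqrt 7) / 648 := by
  set a := exp (-t) with ha
  have h2 : exp (-(2 * t)) = a ^ 2 := by rw [ha, ← Real.exp_nat_mul]; norm_num
  have hapos : 0 < a := exp_pos _
  have hs : Real.sqrt 7 ^ 2 = 7 := Real.sq_sqrt (by norm_num)
  have hs2 : (2:ℝ) ≤ Real.sqrt 7 := by
    nlinarith [Real.sqrt_nonneg 7]
  rw [h2]
  nlinarith [mul_nonneg (sq_nonneg (6 * a - 1 - Real.sqrt 7))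
    (by nlinarith : (0:ℝ) ≤ 6 * a - 1 + 2 * Real.sqrt 7)]

lemma part3 :
    ∃ t : ℝ, 0 ≤ t ∧ exp (-t) = (Real.sqrt 7 + 1) / 6 ∧
      (1 / 12) * exp (-t) * (1 + exp (-t) - 2 * exp (-(2 * t))) =
        (10 + 7 * Real.sqrt 7) / 648 := by
  have hs : Real.sqrt 7 ^ 2 = 7 := Real.sq_sqrt (by norm_num)
  have hs2 : (2:ℝ) ≤ Real.sqrt 7 := by nlinarith [Real.sqrt_nonneg 7]
  have hs3 : Real.sqrt 7 ≤ 3 := by nlinarith [Real.sqrt_nonneg 7]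
  have hpos : (0:ℝ) < (Real.sqrt 7 + 1) / 6 := by linarith
  refine ⟨-Real.log ((Real.sqrt 7 + 1) / 6), ?_, ?_, ?_⟩
  · have : Real.log ((Real.sqrt 7 + 1) / 6) ≤ 0 :=
      Real.log_nonpos (by linarith) (by linarith)
    linarith
  · rw [neg_neg, Real.exp_log hpos]
  · have he : exp (-(-Real.log ((Real.sqrt 7 + 1) / 6))) = (Real.sqrt 7 + 1) / 6 := by
      rw [neg_neg, Real.exp_log hpos]
    have h2 : exp (-(2 * -Real.log ((Real.sqrt 7 + 1) / 6)))
        = ((Real.sqrt 7 + 1) / 6) ^ 2 := by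
      rw [show -(2 * -Real.log ((Real.sqrt 7 + 1) / 6))
          = ((2:ℕ):ℝ) * -(-Real.log ((Real.sqrt 7 + 1) / 6)) by push_cast; ring,
        Real.exp_nat_mul, he]
    rw [he, h2]
    nlinarith [hs]

/-- The kernel family of the one-sided Puri–Rubin statistic
for a standard exponential observation `X`: for
`Ψ(x₁,x₂;t) = 1{|x₁−x₂| < t} − ½(1{x₁<t} + 1{x₂<t})`, the projection is
`ψ(s;t) = (e^{−s+t} − ½)·1{s ≥ t} − e^{−t}(e^{−s} − ½)`, the variance function
is `∫₀^∞ ψ(s;t)² e^{−s} ds = (1/12) e^{−t}(1 + e^{−t} − 2e^{−2t})`, and its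
maximum over `t ≥ 0` is `(10 + 7√7)/648`, attained where
`e^{−t} = (√7 + 1)/6`. -/
theorem statement_17 :
    (∀ t : ℝ, 0 ≤ t →
      (∀ s : ℝ, 0 ≤ s →
        ∫ x in Ioi (0 : ℝ),
            ((if |s - x| < t then (1 : ℝ) else 0) -
              (1 / 2) * ((if s < t then (1 : ℝ) else 0) +
                (if x < t then (1 : ℝ) else 0))) * exp (-x) =
          (exp (-s + t) - 1 / 2) * (if t ≤ s then (1 : ℝ) else 0) -
            exp (-t) * (exp (-s) - 1 / 2)) ∧
      ∫ s in Ioi (0 : ℝ),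
          ((exp (-s + t) - 1 / 2) * (if t ≤ s then (1 : ℝ) else 0) -
            exp (-t) * (exp (-s) - 1 / 2)) ^ 2 * exp (-s) =
        (1 / 12) * exp (-t) * (1 + exp (-t) - 2 * exp (-(2 * t)))) ∧
    (∀ t : ℝ, 0 ≤ t →
      (1 / 12) * exp (-t) * (1 + exp (-t) - 2 * exp (-(2 * t))) ≤
        (10 + 7 * Real.sqrt 7) / 648) ∧
    ∃ t : ℝ, 0 ≤ t ∧ exp (-t) = (Real.sqrt 7 + 1) / 6 ∧
      (1 / 12) * exp (-t) * (1 + exp (-t) - 2 * exp (-(2 * t))) =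
        (10 + 7 * Real.sqrt 7) / 648 := by
  refine ⟨fun t ht => ⟨proj_eq t ht, var_eq t ht⟩, part2, part3⟩
end

section
/- Let X be uniformly distributed on [−1,1] (density ½), and for t ∈ (0,1) consider the kernel Ξ(x,y;t) = 1{|max(x,y)| ≤ t} − ½( 1{|x| ≤ t} + 1{|y| ≤ t} ) on [−1,1]². Then the projection ξ(z;t) = E[Ξ(z,X;t)] equals t/2 for −1 ≤ z < −t, equals 0 for −t ≤ z ≤ t, and equals −t/2 for t < z ≤ 1; the variance function equals ∫_{−1}^{1} ξ(z;t)² · ½ dz = ¼ t²(1 − t), and the maximum of ¼ t²(1 − t) over t ∈ [0,1] equals 1/27 and is attained at t = 2/3. -/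
open MeasureTheory Set Real

lemma ind_intble (a b : ℝ) : IntervalIntegrable (fun x => if a ≤ x ∧ x ≤ b then (1:ℝ) else 0) volume (-1) 1 := by
  have heq : (fun x => if a ≤ x ∧ x ≤ b then (1:ℝ) else 0)
      = Set.indicator (Set.Icc a b) (fun _ => (1:ℝ)) := by
    funext x; simp [Set.indicator_apply, Set.mem_Icc]
  rw [heq, intervalIntegrable_iff]
  exact ((integrable_indicator_iff measurableSet_Icc).2 (by simp)).integrableOn

lemma ind_int {a b : ℝ} (h1 : -1 ≤ a) (hab : a ≤ b) (h2 : b ≤ 1) :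
    ∫ x in (-1:ℝ)..1, (if a ≤ x ∧ x ≤ b then (1:ℝ) else 0) = b - a := by
  have heq : (fun x => if a ≤ x ∧ x ≤ b then (1:ℝ) else 0)
      = Set.indicator (Set.Icc a b) (fun _ => (1:ℝ)) := by
    funext x; simp [Set.indicator_apply, Set.mem_Icc]
  rw [intervalIntegral.integral_of_le (by norm_num : (-1:ℝ) ≤ 1), heq,
    MeasureTheory.integral_indicator measurableSet_Icc,
    MeasureTheory.Measure.restrict_restrict measurableSet_Icc,
    MeasureTheory.setIntegral_const]
  have hsub1 : Set.Ioc a b ⊆ Set.Icc a b ∩ Set.Ioc (-1:ℝ) 1 := fun x hx =>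
    ⟨⟨le_of_lt hx.1, hx.2⟩, lt_of_le_of_lt h1 hx.1, hx.2.trans h2⟩
  have hsub2 : Set.Icc a b ∩ Set.Ioc (-1:ℝ) 1 ⊆ Set.Icc a b := inter_subset_left
  have hm : volume (Set.Icc a b ∩ Set.Ioc (-1:ℝ) 1) = ENNReal.ofReal (b - a) := by
    refine le_antisymm ?_ ?_
    · calc volume (Set.Icc a b ∩ Set.Ioc (-1:ℝ) 1) ≤ volume (Set.Icc a b) := measure_mono hsub2
        _ = ENNReal.ofReal (b - a) := Real.volume_Icc
    · calc ENNReal.ofReal (b - a) = volume (Set.Ioc a b) := Real.volume_Ioc.symm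
        _ ≤ _ := measure_mono hsub1
  simp [measureReal_def, hm, ENNReal.toReal_ofReal (by linarith : (0:ℝ) ≤ b - a)]

/-- The kernel family of the one-sided Baringhaus–Henze
symmetry statistic for a uniform `[−1,1]` observation `X` (density `½`): for
`Ξ(x,y;t) = 1{|max(x,y)| ≤ t} − ½(1{|x| ≤ t} + 1{|y| ≤ t})`, the projection is
`ξ(z;t) = t/2` on `[−1,−t)`, `0` on `[−t,t]` and `−t/2` on `(t,1]`, the
variance function is `∫_{−1}^1 ξ(z;t)²·½ dz = ¼ t²(1−t)`, and the maximum of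
`¼ t²(1−t)` over `[0,1]` is `1/27`, attained at `t = 2/3`. -/
theorem statement_19 :
    (∀ t : ℝ, t ∈ Ioo (0 : ℝ) 1 →
      (∀ z : ℝ, z ∈ Icc (-1 : ℝ) 1 →
        ∫ x in (-1 : ℝ)..1,
            ((if |max z x| ≤ t then (1 : ℝ) else 0) -
              (1 / 2) * ((if |z| ≤ t then (1 : ℝ) else 0) +
                (if |x| ≤ t then (1 : ℝ) else 0))) * (1 / 2) =
          if z < -t then t / 2 else if z ≤ t then 0 else -(t / 2)) ∧
      ∫ z in (-1 : ℝ)..1,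
          (if z < -t then t / 2 else if z ≤ t then (0 : ℝ) else -(t / 2)) ^ 2 *
            (1 / 2) =
        (1 / 4) * t ^ 2 * (1 - t)) ∧
    (∀ t ∈ Icc (0 : ℝ) 1, (1 / 4) * t ^ 2 * (1 - t) ≤ 1 / 27) ∧
    (1 / 4) * (2 / 3 : ℝ) ^ 2 * (1 - 2 / 3) = 1 / 27 := by
  refine ⟨?_, ?_, by norm_num⟩
  · intro t ht
    obtain ⟨ht0, ht1⟩ := ht
    constructor
    · intro z hz
      by_cases h1 : z < -t
      · -- ξ = t/2
        have hB : ¬ |z| ≤ t := by rw [abs_le]; push_neg; intro h; linarith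
        have key : (∫ x in (-1 : ℝ)..1,
            ((if |max z x| ≤ t then (1 : ℝ) else 0) -
              (1 / 2) * ((if |z| ≤ t then (1 : ℝ) else 0) +
                (if |x| ≤ t then (1 : ℝ) else 0))) * (1 / 2)) =
            ∫ x in (-1 : ℝ)..1, (1/4) * (if -t ≤ x ∧ x ≤ t then (1:ℝ) else 0) := by
          apply intervalIntegral.integral_congr
          intro x _
          have hA : |max z x| ≤ t ↔ (-t ≤ x ∧ x ≤ t) := by
            rw [abs_le, max_le_iff, le_max_iff]
            constructor
            · rintro ⟨h | h, _, hx⟩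
              · exact absurd h (by linarith)
              · exact ⟨h, hx⟩
            · rintro ⟨h, hx⟩
              exact ⟨Or.inr h, by linarith, hx⟩
          simp only [hA, hB, if_false, abs_le]
          by_cases hP : -t ≤ x ∧ x ≤ t <;> simp [hP] <;> ring
        rw [key, intervalIntegral.integral_const_mul,
          ind_int (by linarith) (by linarith) (by linarith), if_pos h1]
        ring
      · push_neg at h1
        by_cases h2 : z ≤ t
        · -- ξ = 0
          have hB : |z| ≤ t := abs_le.2 ⟨by linarith, h2⟩
          have key : (∫ x in (-1 : ℝ)..1,
              ((if |max z x| ≤ t then (1 : ℝ) else 0) -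
                (1 / 2) * ((if |z| ≤ t then (1 : ℝ) else 0) +
                  (if |x| ≤ t then (1 : ℝ) else 0))) * (1 / 2)) =
              ∫ x in (-1 : ℝ)..1, ((1/2) * (if -1 ≤ x ∧ x ≤ t then (1:ℝ) else 0)
                - (1/4) * (if -t ≤ x ∧ x ≤ t then (1:ℝ) else 0) - 1/4) := by
            apply intervalIntegral.integral_congr
            intro x hx
            rw [Set.uIcc_of_le (by norm_num : (-1:ℝ) ≤ 1)] at hx
            have hA : |max z x| ≤ t ↔ (-1 ≤ x ∧ x ≤ t) := by
              rw [abs_le, max_le_iff, le_max_iff]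
              constructor
              · rintro ⟨_, _, hxt⟩; exact ⟨hx.1, hxt⟩
              · rintro ⟨_, hxt⟩; exact ⟨Or.inl h1, h2, hxt⟩
            simp only [hA, hB, if_true, abs_le]
            by_cases hP : -1 ≤ x ∧ x ≤ t <;> by_cases hQ : -t ≤ x ∧ x ≤ t <;>
              simp [hP, hQ] <;> (try split_ifs) <;> norm_num
          rw [key, intervalIntegral.integral_sub
              (((ind_intble (-1) t).const_mul _).sub ((ind_intble (-t) t).const_mul _))
              intervalIntegrable_const,
            intervalIntegral.integral_sub ((ind_intble (-1) t).const_mul _)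
              ((ind_intble (-t) t).const_mul _),
            intervalIntegral.integral_const_mul, intervalIntegral.integral_const_mul,
            ind_int (le_refl _) (by linarith) (by linarith),
            ind_int (by linarith) (by linarith) (by linarith),
            intervalIntegral.integral_const, if_neg (not_lt.2 h1), if_pos h2]
          simp; ring
        · -- ξ = -t/2
          push_neg at h2
          have hB : ¬ |z| ≤ t := by rw [abs_le]; push_neg; intro h; linarith
          have key : (∫ x in (-1 : ℝ)..1,
              ((if |max z x| ≤ t then (1 : ℝ) else 0) -
                (1 / 2) * ((if |z| ≤ t then (1 : ℝ) else 0) +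
                  (if |x| ≤ t then (1 : ℝ) else 0))) * (1 / 2)) =
              ∫ x in (-1 : ℝ)..1, (-(1/4)) * (if -t ≤ x ∧ x ≤ t then (1:ℝ) else 0) := by
            apply intervalIntegral.integral_congr
            intro x _
            have hA : ¬ |max z x| ≤ t := fun h =>
              absurd (abs_le.1 h).2 (not_le.2 (lt_of_lt_of_le h2 (le_max_left _ _)))
            simp only [hA, hB, if_false, abs_le]
            by_cases hP : -t ≤ x ∧ x ≤ t <;> simp [hP] <;> ring
          rw [key, intervalIntegral.integral_const_mul,
            ind_int (by linarith) (by linarith) (by linarith),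
            if_neg (not_lt.2 h1), if_neg (not_le.2 h2)]
          ring
    · -- variance integral
      have key : (∫ z in (-1 : ℝ)..1,
          (if z < -t then t / 2 else if z ≤ t then (0 : ℝ) else -(t / 2)) ^ 2 * (1 / 2)) =
          ∫ z in (-1 : ℝ)..1, (t^2/8 - (t^2/8) * (if -t ≤ z ∧ z ≤ t then (1:ℝ) else 0)) := by
        apply intervalIntegral.integral_congr
        intro z _
        dsimp only
        by_cases h1 : z < -t
        · rw [if_pos h1, if_neg (by push_neg; intro h; linarith)]
          ring
        · push_neg at h1
          by_cases h2 : z ≤ t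
          · rw [if_neg (not_lt.2 h1), if_pos h2, if_pos ⟨h1, h2⟩]; ring
          · push_neg at h2
            rw [if_neg (not_lt.2 h1), if_neg (not_le.2 h2),
              if_neg (by push_neg; intro; linarith)]
            ring
      rw [key, intervalIntegral.integral_sub intervalIntegrable_const
          ((ind_intble (-t) t).const_mul _),
        intervalIntegral.integral_const, intervalIntegral.integral_const_mul,
        ind_int (by linarith) (by linarith) (by linarith)]
      simp; ring
  · intro t ht
    nlinarith [mul_nonneg (sq_nonneg (3*t - 2)) (by linarith [ht.1] : (0:ℝ) ≤ 3*t + 1)]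
end
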